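/- arXiv:0809.1883 — 8 statements merged into one kernel-verified Lean document; each statement's English description precedes it below -/
import Mathlib

section
/- A rectangle with width w and height h can be dissected into finitely many squares if and only if w/h is rational. -/
/-- An axis-parallel box in ℝⁿ with positive side lengths. -/
structure Box (n : ℕ) where
  lower : Fin n → ℝ
  upper : Fin n → ℝ
  lower_lt_upper : ∀ i, lower i < upper i

namespace Box

/-- The closed box as a subset of ℝⁿ. -/
def toSet {n : ℕ} (B : Box n) : Set (Fin n → ℝ) :=
  Set.univ.pi fun i => Set.Icc (B.lower i) (B.upper i)

/-- The open interior of the box. -/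
def interiorSet {n : ℕ} (B : Box n) : Set (Fin n → ℝ) :=
  Set.univ.pi fun i => Set.Ioo (B.lower i) (B.upper i)

/-- The side length of the box in direction `i`. -/
def side {n : ℕ} (B : Box n) (i : Fin n) : ℝ := B.upper i - B.lower i

end Box

/-- The boxes `t` form a finite partition (dissection) of `B`:
pairwise disjoint interiors, and their union covers `B`. -/
def IsDissection {n m : ℕ} (B : Box n) (t : Fin m → Box n) : Prop :=
  (∀ i j, i ≠ j → Disjoint (t i).interiorSet (t j).interiorSet) ∧
  (⋃ i, (t i).toSet) = B.toSet

/-- `P` is cut by a hyperplane parallel to a pair of its faces into `P₁` and `P₂`. -/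
def IsSplit {n : ℕ} (P P₁ P₂ : Box n) : Prop :=
  ∃ (j : Fin n) (c : ℝ), P.lower j < c ∧ c < P.upper j ∧
    P₁.lower = P.lower ∧ P₁.upper = Function.update P.upper j c ∧
    P₂.lower = Function.update P.lower j c ∧ P₂.upper = P.upper

/-!
If `w / h = a / b` with `a, b ∈ ℕ`, the rectangle is an `a × b` grid of equal squares.
Conversely (Dehn), if `w / h` is irrational, then `h` and `w` are linearly independent over `ℚ`,
so there is a `ℚ`-linear `f : ℝ → ℚ` with `f h = 1` and `f w = -1`. The `f`-area `∏ⱼ f (side j)` of a box is additive under dissections: refine the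
dissection to the grid of all corner coordinates and telescope along each axis. A dissection
into squares of sides `sᵢ` would then give `-1 = f w * f h = ∑ᵢ f (sᵢ) ^ 2 ≥ 0`.
-/

open Finset
open scoped Function

section ConsecutivePairs

variable {α : Type*} [LinearOrder α]

def consecutivePairs (X : Finset α) : Finset (α × α) :=
  (X ×ˢ X).filter fun pq => pq.1 < pq.2 ∧ ∀ z ∈ X, z ∉ Set.Ioo pq.1 pq.2

variable {X : Finset α} {p q x : α}

theorem mem_consecutivePairs :
    (p, q) ∈ consecutivePairs X ↔ p ∈ X ∧ q ∈ X ∧ p < q ∧ ∀ z ∈ X, z ∉ Set.Ioo p q := by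
  simp [consecutivePairs, and_assoc]

theorem le_fst_of_mem_consecutivePairs (hpq : (p, q) ∈ consecutivePairs X) (hx : x ∈ X)
    (hxq : x < q) : x ≤ p :=
  not_lt.1 fun hpx => (mem_consecutivePairs.1 hpq).2.2.2 x hx ⟨hpx, hxq⟩

theorem snd_le_of_mem_consecutivePairs (hpq : (p, q) ∈ consecutivePairs X) (hx : x ∈ X)
    (hpx : p < x) : q ≤ x :=
  not_lt.1 fun hxq => (mem_consecutivePairs.1 hpq).2.2.2 x hx ⟨hpx, hxq⟩

theorem exists_mem_consecutivePairs {a b : α} (ha : a ∈ X) (hb : b ∈ X) (hab : a < b) :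
    ∃ c ≤ b, (a, c) ∈ consecutivePairs X := by
  have hne : (X.filter fun z => a < z ∧ z ≤ b).Nonempty := ⟨b, mem_filter.2 ⟨hb, hab, le_rfl⟩⟩
  obtain ⟨hcX, hac, hcb⟩ := mem_filter.1 (min'_mem _ hne)
  refine ⟨_, hcb, mem_consecutivePairs.2 ⟨ha, hcX, hac, fun z hz ⟨haz, hzc⟩ => ?_⟩⟩
  exact hzc.not_ge (min'_le _ _ (mem_filter.2 ⟨hz, haz, hzc.le.trans hcb⟩))

theorem filter_consecutivePairs_eq_insert {a b c : α} (hac : (a, c) ∈ consecutivePairs X)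
    (hcb : c ≤ b) :
    (consecutivePairs X).filter (fun pq => a ≤ pq.1 ∧ pq.2 ≤ b) =
      insert (a, c) ((consecutivePairs X).filter fun pq => c ≤ pq.1 ∧ pq.2 ≤ b) := by
  obtain ⟨haX, hcX, hac', -⟩ := mem_consecutivePairs.1 hac
  ext ⟨p, q⟩
  simp only [mem_filter, mem_insert, Prod.mk.injEq]
  constructor
  · rintro ⟨hpq, hap, hqb⟩
    obtain ⟨hpX, hqX, hpq', -⟩ := mem_consecutivePairs.1 hpq
    rcases hap.eq_or_lt with rfl | hap
    · exact .inl ⟨rfl, le_antisymm (snd_le_of_mem_consecutivePairs hpq hcX hac')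
        (snd_le_of_mem_consecutivePairs hac hqX hpq')⟩
    · exact .inr ⟨hpq, snd_le_of_mem_consecutivePairs hac hpX hap, hqb⟩
  · rintro (⟨rfl, rfl⟩ | ⟨hpq, hcp, hqb⟩)
    · exact ⟨hac, le_rfl, hcb⟩
    · exact ⟨hpq, hac'.le.trans hcp, hqb⟩

theorem sum_filter_consecutivePairs_sub {G : Type*} [AddCommGroup G] (g : α → G) {a b : α}
    (ha : a ∈ X) (hb : b ∈ X) (hab : a ≤ b) :
    ∑ pq ∈ (consecutivePairs X).filter (fun pq => a ≤ pq.1 ∧ pq.2 ≤ b), (g pq.2 - g pq.1) =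
      g b - g a := by
  rcases hab.eq_or_lt with rfl | hab
  · rw [filter_false_of_mem, sum_empty, sub_self]
    rintro ⟨p, q⟩ hpq ⟨hap, hqa⟩
    exact (hap.trans_lt (mem_consecutivePairs.1 hpq).2.2.1).not_ge hqa
  obtain ⟨c, hcb, hac⟩ := exists_mem_consecutivePairs ha hb hab
  have hac' := (mem_consecutivePairs.1 hac).2.2.1
  rw [filter_consecutivePairs_eq_insert hac hcb, sum_insert (by simp [hac'.not_ge]),
    sum_filter_consecutivePairs_sub g (mem_consecutivePairs.1 hac).2.1 hb hcb]
  abel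
termination_by (X.filter fun z => a < z ∧ z ≤ b).card
decreasing_by
  refine card_lt_card (ssubset_iff_of_subset ?_ |>.2 ⟨c, ?_, ?_⟩)
  · exact monotone_filter_right _ fun z _ ⟨hcz, hzb⟩ => ⟨hac'.trans hcz, hzb⟩
  · exact mem_filter.2 ⟨(mem_consecutivePairs.1 hac).2.1, hac', hcb⟩
  · simp

end ConsecutivePairs

theorem disjoint_Ioo_add_mul {a s : ℝ} {i i' : ℕ} (h : i ≠ i') :
    Disjoint (Set.Ioo (a + i * s) (a + (i + 1) * s)) (Set.Ioo (a + i' * s) (a + (i' + 1) * s)) := by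
  simpa [zsmul_eq_mul] using Set.pairwise_disjoint_Ioo_add_zsmul a s (Nat.cast_injective.ne h)

theorem exists_lt_mem_Icc_add_mul {a s x : ℝ} {k : ℕ} (hs : 0 < s) (hk : 0 < k)
    (hx : x ∈ Set.Icc a (a + k * s)) : ∃ i < k, x ∈ Set.Icc (a + i * s) (a + (i + 1) * s) := by
  have hfloor : ⌊(x - a) / s⌋₊ * s ≤ x - a :=
    (le_div_iff₀ hs).1 (Nat.floor_le (div_nonneg (sub_nonneg.2 hx.1) hs.le))
  rcases lt_or_ge ⌊(x - a) / s⌋₊ k with hlt | hge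
  · refine ⟨_, hlt, by linarith, ?_⟩
    have := (div_lt_iff₀ hs).1 (Nat.lt_floor_add_one ((x - a) / s))
    linarith
  · refine ⟨k - 1, by omega, ?_, ?_⟩
    · have : ((k - 1 : ℕ) : ℝ) ≤ ⌊(x - a) / s⌋₊ := by exact_mod_cast (k.sub_le 1).trans hge
      nlinarith
    · rw [Nat.cast_sub hk, Nat.cast_one, sub_add_cancel]
      exact hx.2

theorem LinearMap.exists_apply_eq_apply_eq {K V W : Type*} [DivisionRing K] [AddCommGroup V]
    [Module K V] [AddCommGroup W] [Module K W] {x y : V} (hx : x ≠ 0) (hy : y ∉ K ∙ x)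
    (a b : W) : ∃ f : V →ₗ[K] W, f x = a ∧ f y = b := by
  obtain ⟨f, hf, hfy⟩ := LinearMap.exists_extend_of_notMem
    (LinearPMap.mkSpanSingleton (σ := RingHom.id K) x a hx).toFun hy b
  exact ⟨f, congr($hf ⟨x, _⟩).trans (LinearPMap.mkSpanSingleton_apply K K hx a), hfy⟩

theorem Irrational.notMem_span_singleton {x y : ℝ} (hirr : Irrational (y / x)) :
    y ∉ ℚ ∙ x := by
  rw [Submodule.mem_span_singleton]
  rintro ⟨q, rfl⟩
  rcases eq_or_ne x 0 with rfl | hx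
  · simp at hirr
  · exact hirr ⟨q, by rw [Rat.smul_def, mul_div_cancel_right₀ _ hx]⟩

namespace Box

variable {n : ℕ}

theorem mem_toSet {B : Box n} {x : Fin n → ℝ} :
    x ∈ B.toSet ↔ ∀ j, B.lower j ≤ x j ∧ x j ≤ B.upper j := by
  simp [toSet, Pi.le_def, forall_and]

theorem mem_interiorSet {B : Box n} {x : Fin n → ℝ} :
    x ∈ B.interiorSet ↔ ∀ j, B.lower j < x j ∧ x j < B.upper j := by
  simp [interiorSet, Set.mem_pi]

theorem lower_mem_toSet (B : Box n) : B.lower ∈ B.toSet :=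
  mem_toSet.2 fun j => ⟨le_rfl, (B.lower_lt_upper j).le⟩

theorem upper_mem_toSet (B : Box n) : B.upper ∈ B.toSet :=
  mem_toSet.2 fun j => ⟨(B.lower_lt_upper j).le, le_rfl⟩

theorem interiorSet_subset_toSet (B : Box n) : B.interiorSet ⊆ B.toSet :=
  Set.pi_mono fun _ _ => Set.Ioo_subset_Icc_self

theorem side_pos (B : Box n) (j : Fin n) : 0 < B.side j :=
  sub_pos.2 (B.lower_lt_upper j)

end Box

theorem IsDissection.toSet_subset {n m : ℕ} {B : Box n} {t : Fin m → Box n}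
    (hd : IsDissection B t) (i : Fin m) : (t i).toSet ⊆ B.toSet :=
  hd.2 ▸ Set.subset_iUnion (fun i => (t i).toSet) i

theorem IsDissection.of_fintype {n : ℕ} {ι : Type*} [Fintype ι] {B : Box n} (u : ι → Box n)
    (hdisj : Pairwise (Disjoint on fun i => (u i).interiorSet))
    (hcover : ⋃ i, (u i).toSet = B.toSet) :
    IsDissection B (u ∘ (Fintype.equivFin ι).symm) :=
  ⟨fun _ _ hij => hdisj ((Fintype.equivFin ι).symm.injective.ne hij),
    (Equiv.iSup_comp (g := fun i => (u i).toSet) _).trans hcover⟩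

noncomputable section GridCells

variable {n : ℕ} (X : Fin n → Finset ℝ)

/-- The cells of the grid `X` inside `P`; a cell is a pair of consecutive points of `X j` on
every axis `j`. -/
def gridCells (P : Box n) : Finset (Fin n → ℝ × ℝ) :=
  Fintype.piFinset fun j => (consecutivePairs (X j)).filter fun pq =>
    P.lower j ≤ pq.1 ∧ pq.2 ≤ P.upper j

def cellCenter (c : Fin n → ℝ × ℝ) : Fin n → ℝ := fun j => ((c j).1 + (c j).2) / 2

variable {X} {P : Box n} {c : Fin n → ℝ × ℝ}

theorem mem_gridCells : c ∈ gridCells X P ↔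
    ∀ j, c j ∈ consecutivePairs (X j) ∧ P.lower j ≤ (c j).1 ∧ (c j).2 ≤ P.upper j := by
  simp [gridCells, Fintype.mem_piFinset]

theorem prod_side_eq_sum_gridCells {R : Type*} [CommRing R] (g : ℝ →+ R)
    (hl : ∀ j, P.lower j ∈ X j) (hu : ∀ j, P.upper j ∈ X j) :
    ∏ j, g (P.side j) = ∑ c ∈ gridCells X P, ∏ j, (g (c j).2 - g (c j).1) := by
  simp_rw [Box.side, map_sub, ← sum_filter_consecutivePairs_sub g (hl _) (hu _)
    (P.lower_lt_upper _).le]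
  exact prod_univ_sum _ _

theorem cellCenter_mem_interiorSet (hc : c ∈ gridCells X P) : cellCenter c ∈ P.interiorSet := by
  refine Box.mem_interiorSet.2 fun j => ?_
  obtain ⟨hcj, hl, hu⟩ := mem_gridCells.1 hc j
  have := (mem_consecutivePairs.1 hcj).2.2.1
  constructor <;> simp only [cellCenter] <;> linarith

theorem mem_gridCells_of_cellCenter_mem (hl : ∀ j, P.lower j ∈ X j) (hu : ∀ j, P.upper j ∈ X j)
    (hc : ∀ j, c j ∈ consecutivePairs (X j)) (hP : cellCenter c ∈ P.toSet) :
    c ∈ gridCells X P := by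
  refine mem_gridCells.2 fun j => ⟨hc j, ?_, ?_⟩
  all_goals
    have := (mem_consecutivePairs.1 (hc j)).2.2.1
    have := Box.mem_toSet.1 hP j
    simp only [cellCenter] at this
  · exact le_fst_of_mem_consecutivePairs (hc j) (hl j) (by linarith)
  · exact snd_le_of_mem_consecutivePairs (hc j) (hu j) (by linarith)

theorem gridCells_mono {Q : Box n} (hPQ : P.toSet ⊆ Q.toSet) : gridCells X P ⊆ gridCells X Q := by
  intro c hc
  refine mem_gridCells.2 fun j => ?_
  obtain ⟨hcj, hl, hu⟩ := mem_gridCells.1 hc j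
  exact ⟨hcj, (Box.mem_toSet.1 (hPQ P.lower_mem_toSet) j).1.trans hl,
    hu.trans (Box.mem_toSet.1 (hPQ P.upper_mem_toSet) j).2⟩

end GridCells

namespace IsDissection

variable {n m : ℕ} {B : Box n} {t : Fin m → Box n}

theorem existsUnique_mem_gridCells (hd : IsDissection B t) {X : Fin n → Finset ℝ}
    (hl : ∀ i j, (t i).lower j ∈ X j) (hu : ∀ i j, (t i).upper j ∈ X j)
    {c : Fin n → ℝ × ℝ} (hc : c ∈ gridCells X B) : ∃! i, c ∈ gridCells X (t i) := by
  have hcenter : cellCenter c ∈ ⋃ i, (t i).toSet :=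
    hd.2 ▸ B.interiorSet_subset_toSet (cellCenter_mem_interiorSet hc)
  obtain ⟨i, hi⟩ := Set.mem_iUnion.1 hcenter
  have hci := mem_gridCells_of_cellCenter_mem (hl i) (hu i) (fun j => (mem_gridCells.1 hc j).1) hi
  refine ⟨i, hci, fun i' hci' => by_contra fun hne => ?_⟩
  exact Set.disjoint_left.1 (hd.1 i' i hne) (cellCenter_mem_interiorSet hci')
    (cellCenter_mem_interiorSet hci)

theorem sum_prod_side (hd : IsDissection B t) {R : Type*} [CommRing R] (g : ℝ →+ R) :
    ∑ i, ∏ j, g ((t i).side j) = ∏ j, g (B.side j) := by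
  classical
  set X : Fin n → Finset ℝ := fun j => insert (B.lower j) (insert (B.upper j)
    (univ.image (fun i => (t i).lower j) ∪ univ.image (fun i => (t i).upper j)))
  have hl : ∀ i j, (t i).lower j ∈ X j := by simp [X]
  have hu : ∀ i j, (t i).upper j ∈ X j := by simp [X]
  rw [prod_side_eq_sum_gridCells (X := X) g (by simp [X]) (by simp [X])]
  calc ∑ i, ∏ j, g ((t i).side j)
      = ∑ i, ∑ c ∈ gridCells X (t i), ∏ j, (g (c j).2 - g (c j).1) :=
        sum_congr rfl fun i _ => prod_side_eq_sum_gridCells g (hl i) (hu i)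
    _ = ∑ c ∈ gridCells X B, ∑ i with c ∈ gridCells X (t i), ∏ j, (g (c j).2 - g (c j).1) :=
        sum_comm' fun i c => by
          simpa using fun hc => gridCells_mono (hd.toSet_subset i) hc
    _ = ∑ c ∈ gridCells X B, ∏ j, (g (c j).2 - g (c j).1) := by
        refine sum_congr rfl fun c hc => ?_
        rw [sum_const, (Fintype.existsUnique_iff_card_one _).1
          (hd.existsUnique_mem_gridCells hl hu hc), one_smul]

end IsDissection

theorem IsDissection.exists_rat_side_div_side_eq {m : ℕ} {B : Box 2} {t : Fin m → Box 2}
    (hd : IsDissection B t) (hsq : ∀ i, (t i).side 0 = (t i).side 1) :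
    ∃ q : ℚ, B.side 0 / B.side 1 = q := by
  by_contra hirr
  obtain ⟨f, hf1, hf0⟩ := LinearMap.exists_apply_eq_apply_eq (B.side_pos 1).ne'
    (Irrational.notMem_span_singleton (x := B.side 1) fun ⟨q, hq⟩ => hirr ⟨q, hq.symm⟩)
    (1 : ℚ) (-1)
  have hsum := hd.sum_prod_side f.toAddMonoidHom
  simp only [Fin.prod_univ_two, LinearMap.toAddMonoidHom_coe, hsq, hf0, hf1] at hsum
  have := sum_nonneg fun i (_ : i ∈ univ) => mul_self_nonneg (f ((t i).side 1))
  linarith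

theorem Box.exists_isDissection_cubes {n : ℕ} (B : Box n) {s : ℝ} (hs : 0 < s)
    (hk : ∀ j, ∃ k : ℕ, B.side j = k * s) :
    ∃ (m : ℕ) (t : Fin m → Box n), IsDissection B t ∧ ∀ i j, (t i).side j = s := by
  choose k hk using hk
  have hk_pos : ∀ j, 0 < k j := fun j => by
    have := hk j ▸ B.side_pos j
    exact_mod_cast pos_of_mul_pos_left this hs.le
  have hupper : ∀ j, B.upper j = B.lower j + k j * s := fun j => by
    rw [← hk j, side, add_sub_cancel]
  let cube (α : ∀ j, Fin (k j)) : Box n :=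
    ⟨fun j => B.lower j + (α j : ℕ) * s, fun j => B.lower j + ((α j : ℕ) + 1) * s,
      fun j => by linarith⟩
  refine ⟨_, cube ∘ (Fintype.equivFin _).symm, IsDissection.of_fintype cube ?_ ?_,
    fun i j => by simp only [side, cube, Function.comp_apply]; ring⟩
  · intro α β hαβ
    obtain ⟨j, hj⟩ := Function.ne_iff.1 hαβ
    refine Set.disjoint_left.2 fun x hα hβ => ?_
    exact Set.disjoint_left.1 (disjoint_Ioo_add_mul (Fin.val_injective.ne hj))
      (mem_interiorSet.1 hα j) (mem_interiorSet.1 hβ j)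
  · ext x
    simp only [Set.mem_iUnion, mem_toSet, cube, hupper]
    constructor
    · rintro ⟨α, hα⟩ j
      have := (hα j).1
      have := (hα j).2
      have : ((α j : ℕ) + 1 : ℝ) ≤ k j := by exact_mod_cast (α j).isLt
      constructor <;> nlinarith
    · intro hx
      choose α hα hxα using fun j => exists_lt_mem_Icc_add_mul hs (hk_pos j) (hx j)
      exact ⟨fun j => ⟨α j, hα j⟩, hxα⟩

theorem exists_nat_mul_eq_of_div_eq_rat {w h : ℝ} (hw : 0 < w) (hh : 0 < h) {q : ℚ}
    (hq : w / h = q) :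
    ∃ s > 0, (∃ a : ℕ, w = a * s) ∧ ∃ b : ℕ, h = b * s := by
  have hnum : 0 ≤ q.num := Rat.num_nonneg.2 (by exact_mod_cast hq ▸ (div_pos hw hh).le)
  refine ⟨h / q.den, by positivity, ⟨q.num.toNat, ?_⟩, ⟨q.den, by field_simp⟩⟩
  have hcast : ((q.num.toNat : ℕ) : ℝ) = q.num := by exact_mod_cast Int.toNat_of_nonneg hnum
  rw [div_eq_iff hh.ne', Rat.cast_def] at hq
  rw [hq, hcast]
  ring

/-- Dehn's theorem: the rectangle `[0,w] × [0,h]` can be dissected into finitely many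
squares iff `w / h` is rational. -/
theorem dehn_rectangle_into_squares (w h : ℝ) (hw : 0 < w) (hh : 0 < h) :
    (∀ B : Box 2, B.lower = ![0, 0] → B.upper = ![w, h] →
      ∃ (m : ℕ) (t : Fin m → Box 2), IsDissection B t ∧
        ∀ i, (t i).side 0 = (t i).side 1) ↔
    ∃ q : ℚ, w / h = (q : ℝ) := by
  constructor
  · intro hsquares
    obtain ⟨m, t, hd, hsq⟩ :=
      hsquares ⟨![0, 0], ![w, h], by simp [Fin.forall_fin_two, hw, hh]⟩ rfl rfl
    simpa [Box.side] using hd.exists_rat_side_div_side_eq hsq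
  · rintro ⟨q, hq⟩ B hBl hBu
    obtain ⟨s, hs, ⟨a, ha⟩, ⟨b, hb⟩⟩ := exists_nat_mul_eq_of_div_eq_rat hw hh hq
    obtain ⟨m, t, hd, hcube⟩ := B.exists_isDissection_cubes hs fun j => by
      fin_cases j
      · exact ⟨a, by simp [Box.side, hBl, hBu, ha]⟩
      · exact ⟨b, by simp [Box.side, hBl, hBu, hb]⟩
    exact ⟨m, t, hd, fun i => (hcube i 0).trans (hcube i 1).symm⟩
end

section
/- Let f be a Q-linear function ℝ → ℝ and define F on axis-parallel rectangles by F(R) = w·f(h) − h·f(w) where w, h are the width and height of R. Then F is additive: if a rectangle R is cut by a line parallel to one of its sides into rectangles R₁ and R₂, then F(R) = F(R₁) + F(R₂). Moreover F vanishes on squares. -/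
/-- The Dehn functional `F(R) = w·f(h) − h·f(w)` is additive under cuts
and vanishes on squares. -/
theorem dehn_functional_additive_and_zero_on_squares (f : ℝ → ℝ) (hf : IsLinearMap ℚ f) :
    (∀ P P₁ P₂ : Box 2, IsSplit P P₁ P₂ →
      P.side 0 * f (P.side 1) - P.side 1 * f (P.side 0) =
        (P₁.side 0 * f (P₁.side 1) - P₁.side 1 * f (P₁.side 0)) +
        (P₂.side 0 * f (P₂.side 1) - P₂.side 1 * f (P₂.side 0))) ∧
    (∀ P : Box 2, P.side 0 = P.side 1 →
      P.side 0 * f (P.side 1) - P.side 1 * f (P.side 0) = 0) := by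
  constructor
  · rintro P P₁ P₂ ⟨j, c, h1, h2, e1, e2, e3, e4⟩
    fin_cases j
    · have hadd : f (c - P.lower 0) + f (P.upper 0 - c) = f (P.upper 0 - P.lower 0) := by
        rw [← hf.map_add]; ring_nf
      simp only [Box.side, e1, e2, e3, e4, Function.update, Fin.isValue]
      norm_num
      linear_combination (P.upper 1 - P.lower 1) * hadd
    · have hadd : f (c - P.lower 1) + f (P.upper 1 - c) = f (P.upper 1 - P.lower 1) := by
        rw [← hf.map_add]; ring_nf
      simp only [Box.side, e1, e2, e3, e4, Function.update, Fin.isValue]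
      norm_num
      linear_combination (P.lower 0 - P.upper 0) * hadd
  · intro P h
    rw [h]; ring
end

section
/- If a positive-area rectangle R is partitioned into finitely many rectangles R₁, …, Rₙ (with sides parallel to those of R), and f is any additive function on rectangles (additive under cutting by a line parallel to a side), then f(R) = f(R₁) + ⋯ + f(Rₙ). -/
open Set Function Filter Topology
open scoped BoxIntegral

namespace Box

variable {n : ℕ}

/-- Mathlib's `BoxIntegral.Box` carries the same data, but its underlying set is the half-open
product `∏ (lower i, upper i]` rather than the closed one. -/
def equivBoxIntegral : Box n ≃ BoxIntegral.Box (Fin n) where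
  toFun B := ⟨B.lower, B.upper, B.lower_lt_upper⟩
  invFun I := ⟨I.lower, I.upper, I.lower_lt_upper⟩
  left_inv _ := rfl
  right_inv _ := rfl

theorem mem_equivBoxIntegral {B : Box n} {x : Fin n → ℝ} :
    x ∈ equivBoxIntegral B ↔ ∀ i, x i ∈ Ioc (B.lower i) (B.upper i) :=
  Iff.rfl

theorem equivBoxIntegral_mono {B C : Box n} (h : B.toSet ⊆ C.toSet) :
    equivBoxIntegral B ≤ equivBoxIntegral C := by
  have hlower := h (fun i _ => ⟨le_rfl, (B.lower_lt_upper i).le⟩)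
  have hupper := h (fun i _ => ⟨(B.lower_lt_upper i).le, le_rfl⟩)
  exact BoxIntegral.Box.le_iff_bounds.2
    ⟨fun i => (hlower i trivial).1, fun i => (hupper i trivial).2⟩

theorem interiorSet_nonempty (B : Box n) : B.interiorSet.Nonempty :=
  univ_pi_nonempty_iff.2 fun i => nonempty_Ioo.2 (B.lower_lt_upper i)

theorem disjoint_equivBoxIntegral {B C : Box n} (h : Disjoint B.interiorSet C.interiorSet) :
    Disjoint (equivBoxIntegral B : Set (Fin n → ℝ)) (equivBoxIntegral C) := by
  refine Set.disjoint_left.2 fun x hB hC => ?_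
  set z : Fin n → ℝ := fun i => (max (B.lower i) (C.lower i) + x i) / 2
  suffices z ∈ B.interiorSet ∧ z ∈ C.interiorSet from Set.disjoint_left.1 h this.1 this.2
  refine ⟨fun i _ => ?_, fun i _ => ?_⟩ <;>
  · have := mem_equivBoxIntegral.1 hB i
    have := mem_equivBoxIntegral.1 hC i
    simp only [Set.mem_Ioc, Set.mem_Ioo, z] at *
    constructor <;> cases max_cases (B.lower i) (C.lower i) <;> linarith

end Box

namespace IsDissection

variable {n m : ℕ} {B : Box n} {t : Fin m → Box n}

theorem injective (ht : IsDissection B t) : Injective t := by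
  intro i j hij
  by_contra hne
  have hdisj := ht.1 i j hne
  rw [hij, disjoint_self] at hdisj
  exact (t j).interiorSet_nonempty.ne_empty hdisj

theorem toSet_subset_s3 (ht : IsDissection B t) (i : Fin m) : (t i).toSet ⊆ B.toSet :=
  ht.2 ▸ subset_iUnion (fun i => (t i).toSet) i

/-- Shifting `x` by a small `ε` towards the lower corner keeps it in the closed box `B`; a closed
piece containing the shifted point contains `x` in its half-open version, because `ε` is chosen
below the distance from `x` to every upper face lying below it. -/
theorem exists_mem_equivBoxIntegral (ht : IsDissection B t) {x : Fin n → ℝ}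
    (hx : x ∈ Box.equivBoxIntegral B) :
    ∃ i, x ∈ Box.equivBoxIntegral (t i) := by
  rw [Box.mem_equivBoxIntegral] at hx
  have hsmall : ∀ᶠ ε in 𝓝[>] (0 : ℝ), ∀ k, B.lower k < x k - ε ∧
      ∀ i, (t i).upper k < x k → (t i).upper k < x k - ε := by
    have hsub {a b : ℝ} (h : a < b) : ∀ᶠ ε in 𝓝[>] (0 : ℝ), a < b - ε :=
      (eventually_nhdsWithin_of_eventually_nhds (eventually_lt_nhds (sub_pos.2 h))).mono
        fun _ _ => by linarith
    exact eventually_all.2 fun k => (hsub (hx k).1).and <|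
      eventually_all.2 fun i => eventually_imp_distrib_left.2 hsub
  obtain ⟨ε, hε, hε0 : 0 < ε⟩ := (hsmall.and self_mem_nhdsWithin).exists
  have hshift : (fun k => x k - ε) ∈ B.toSet := fun k _ =>
    ⟨(hε k).1.le, by linarith [(hx k).2]⟩
  rw [← ht.2, mem_iUnion] at hshift
  obtain ⟨i, hi⟩ := hshift
  refine ⟨i, fun k => ⟨(hi k trivial).1.trans_lt (by linarith), ?_⟩⟩
  by_contra hlt
  linarith [(hε k).2 i (not_le.1 hlt), (hi k trivial).2]

def toPrepartition (ht : IsDissection B t) :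
    BoxIntegral.Prepartition (Box.equivBoxIntegral B) where
  boxes := Finset.univ.map
    ((⟨t, ht.injective⟩ : Fin m ↪ Box n).trans Box.equivBoxIntegral.toEmbedding)
  le_of_mem' J hJ := by
    obtain ⟨i, -, rfl⟩ := Finset.mem_map.1 hJ
    exact Box.equivBoxIntegral_mono (ht.toSet_subset_s3 i)
  pairwiseDisjoint := by
    rintro _ hI _ hJ hne
    obtain ⟨i, -, rfl⟩ := Finset.mem_map.1 (Finset.mem_coe.1 hI)
    obtain ⟨j, -, rfl⟩ := Finset.mem_map.1 (Finset.mem_coe.1 hJ)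
    exact Box.disjoint_equivBoxIntegral (ht.1 i j fun h => hne (h ▸ rfl))

theorem isPartition_toPrepartition (ht : IsDissection B t) : ht.toPrepartition.IsPartition :=
  fun _ hx =>
    let ⟨i, hi⟩ := ht.exists_mem_equivBoxIntegral hx
    ⟨_, Finset.mem_map_of_mem _ (Finset.mem_univ i), hi⟩

end IsDissection

def boxAdditiveMapOfSplitAdd {n : ℕ} (f : Box n → ℝ)
    (hf : ∀ P P₁ P₂ : Box n, IsSplit P P₁ P₂ → f P = f P₁ + f P₂) : Fin n →ᵇᵃ[⊤] ℝ :=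
  BoxIntegral.BoxAdditiveMap.ofMapSplitAdd (f ∘ Box.equivBoxIntegral.symm) ⊤
    fun I _ i x hx => by
      rw [BoxIntegral.Box.splitLower_def hx, BoxIntegral.Box.splitUpper_def hx]
      refine (hf _ _ _ ?_).symm
      exact ⟨i, x, hx.1, hx.2, rfl, rfl, rfl, rfl⟩

/-- Any function on rectangles that is additive under cutting by a line parallel to a
side sums correctly over any finite partition into rectangles. -/
theorem additive_function_sums_over_partition (f : Box 2 → ℝ)
    (hf : ∀ P P₁ P₂ : Box 2, IsSplit P P₁ P₂ → f P = f P₁ + f P₂)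
    (R : Box 2) (m : ℕ) (t : Fin m → Box 2) (ht : IsDissection R t) :
    f R = ∑ i, f (t i) := by
  let F := boxAdditiveMapOfSplitAdd f hf
  calc f R = F (Box.equivBoxIntegral R) := rfl
    _ = ∑ J ∈ ht.toPrepartition.boxes, F J :=
      (F.sum_partition_boxes le_top ht.isPartition_toPrepartition).symm
    _ = ∑ i, f (t i) := Finset.sum_map _ _ _
end

section
/- If positive reals a, b, c satisfy a nontrivial integer linear relation k·a + m·b + n·c = 0 (not all of k, m, n zero), then the box a×b×c can be dissected into finitely many boxes each having at most 2 distinct side lengths. -/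
namespace BarDissect

/-- Mixed cut sequence: starting at `lo`, first `q` steps of size `β`, then steps of size `γ`. -/
def mcut (lo β γ : ℝ) (q : ℕ) (j : ℕ) : ℝ :=
  lo + (min j q : ℕ) * β + ((j - q : ℕ)) * γ

lemma mcut_zero (lo β γ : ℝ) (q : ℕ) : mcut lo β γ q 0 = lo := by
  simp [mcut]

lemma mcut_succ_lt {q j : ℕ} (lo β γ : ℝ) (hj : j < q) :
    mcut lo β γ q (j + 1) = mcut lo β γ q j + β := by
  unfold mcut
  have h1 : min (j + 1) q = j + 1 := by omega
  have h2 : min j q = j := by omega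
  have h3 : j + 1 - q = 0 := by omega
  have h4 : j - q = 0 := by omega
  rw [h1, h2, h3, h4]
  push_cast
  ring

lemma mcut_succ_ge {q j : ℕ} (lo β γ : ℝ) (hj : q ≤ j) :
    mcut lo β γ q (j + 1) = mcut lo β γ q j + γ := by
  unfold mcut
  have h1 : min (j + 1) q = q := by omega
  have h2 : min j q = q := by omega
  have h3 : j + 1 - q = (j - q) + 1 := by omega
  rw [h1, h2, h3]
  push_cast
  ring

lemma mcut_end (lo β γ : ℝ) (q r : ℕ) :
    mcut lo β γ q (q + r) = lo + q * β + r * γ := by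
  unfold mcut
  have h1 : min (q + r) q = q := by omega
  have h2 : q + r - q = r := by omega
  rw [h1, h2]

lemma mcut_uniform (lo s : ℝ) (j : ℕ) : mcut lo s s 0 j = lo + j * s := by
  simp [mcut]

lemma cs_mono (c : ℕ → ℝ) (k : ℕ) (h : ∀ j < k, c j < c (j + 1)) :
    ∀ j1 j2, j1 ≤ j2 → j2 ≤ k → c j1 ≤ c j2 := by
  intro j1 j2 h12 h2k
  induction j2, h12 using Nat.le_induction with
  | base => exact le_refl _
  | succ n hn ih =>
    exact le_trans (ih (by omega)) (le_of_lt (h n (by omega)))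

lemma exists_between (c : ℕ → ℝ) (k : ℕ) (hk : 0 < k)
    (h : ∀ j < k, c j < c (j + 1)) (y : ℝ) (h1 : c 0 ≤ y) (h2 : y ≤ c k) :
    ∃ j < k, c j ≤ y ∧ y ≤ c (j + 1) := by
  induction k with
  | zero => omega
  | succ n ih =>
    rcases Nat.eq_zero_or_pos n with h0 | hn
    · subst h0; exact ⟨0, by omega, h1, h2⟩
    · by_cases hy : y ≤ c n
      · obtain ⟨j, hj, hj1, hj2⟩ := ih hn (fun j hj => h j (by omega)) hy
        exact ⟨j, by omega, hj1, hj2⟩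
      · exact ⟨n, by omega, le_of_lt (not_le.mp hy), h2⟩

lemma card_image_le_two (f : Fin 3 → ℝ)
    (h : f 0 = f 1 ∨ f 0 = f 2 ∨ f 1 = f 2) :
    (Finset.univ.image f).card ≤ 2 := by
  have huniv : (Finset.univ : Finset (Fin 3)) = {0, 1, 2} := by decide
  rw [huniv]
  rcases h with h | h | h
  · have : ({0, 1, 2} : Finset (Fin 3)).image f ⊆ {f 1, f 2} := by
      intro x hx
      simp only [Finset.mem_image, Finset.mem_insert, Finset.mem_singleton] at hx ⊢
      obtain ⟨i, hi, rfl⟩ := hx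
      rcases hi with rfl | rfl | rfl <;> simp [h]
    exact le_trans (Finset.card_le_card this) (le_trans (Finset.card_insert_le _ _) (by simp))
  · have : ({0, 1, 2} : Finset (Fin 3)).image f ⊆ {f 1, f 2} := by
      intro x hx
      simp only [Finset.mem_image, Finset.mem_insert, Finset.mem_singleton] at hx ⊢
      obtain ⟨i, hi, rfl⟩ := hx
      rcases hi with rfl | rfl | rfl <;> simp [h]
    exact le_trans (Finset.card_le_card this) (le_trans (Finset.card_insert_le _ _) (by simp))
  · have : ({0, 1, 2} : Finset (Fin 3)).image f ⊆ {f 0, f 1} := by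
      intro x hx
      simp only [Finset.mem_image, Finset.mem_insert, Finset.mem_singleton] at hx ⊢
      obtain ⟨i, hi, rfl⟩ := hx
      rcases hi with rfl | rfl | rfl <;> simp [h]
    exact le_trans (Finset.card_le_card this) (le_trans (Finset.card_insert_le _ _) (by simp))

lemma helperA (a b c : ℝ) (ha : 0 < a) (hb : 0 < b) (hc : 0 < c)
    (k m n : ℤ) (hk : 0 < k) (hm : m ≤ 0) (hn : n ≤ 0)
    (hsum : (k : ℝ) * a + (m : ℝ) * b + (n : ℝ) * c = 0) :
    ∃ p q r : ℕ, 0 < p ∧ 0 < q + r ∧ (p : ℝ) * a = q * b + r * c := by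
  have hkr : ((k.toNat : ℕ) : ℝ) = (k : ℝ) := by exact_mod_cast Int.toNat_of_nonneg hk.le
  have hmr : (((-m).toNat : ℕ) : ℝ) = -(m : ℝ) := by
    exact_mod_cast Int.toNat_of_nonneg (by omega : (0:ℤ) ≤ -m)
  have hnr : (((-n).toNat : ℕ) : ℝ) = -(n : ℝ) := by
    exact_mod_cast Int.toNat_of_nonneg (by omega : (0:ℤ) ≤ -n)
  refine ⟨k.toNat, (-m).toNat, (-n).toNat, by omega, ?_, ?_⟩
  · by_contra hcon
    have hm0 : m = 0 := by omega
    have hn0 : n = 0 := by omega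
    rw [hm0, hn0] at hsum
    push_cast at hsum
    have : (0:ℝ) < (k : ℝ) * a := mul_pos (by exact_mod_cast hk) ha
    linarith
  · rw [hkr, hmr, hnr]; linarith

lemma impossible (a b c : ℝ) (ha : 0 < a) (hb : 0 < b) (hc : 0 < c)
    (k m n : ℤ) (hk : 0 ≤ k) (hm : 0 ≤ m) (hn : 0 ≤ n)
    (hne : ¬(k = 0 ∧ m = 0 ∧ n = 0))
    (hsum : (k : ℝ) * a + (m : ℝ) * b + (n : ℝ) * c = 0) : False := by
  have h1 : 0 ≤ (k : ℝ) * a := mul_nonneg (by exact_mod_cast hk) ha.le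
  have h2 : 0 ≤ (m : ℝ) * b := mul_nonneg (by exact_mod_cast hm) hb.le
  have h3 : 0 ≤ (n : ℝ) * c := mul_nonneg (by exact_mod_cast hn) hc.le
  have hk0 : k = 0 := by
    by_contra hk0
    have hk' : (0:ℝ) < (k : ℝ) := by exact_mod_cast lt_of_le_of_ne hk (Ne.symm hk0)
    nlinarith
  have hm0 : m = 0 := by
    by_contra hm0
    have : (0:ℝ) < (m : ℝ) := by exact_mod_cast lt_of_le_of_ne hm (Ne.symm hm0)
    nlinarith
  have hn0 : n = 0 := by
    by_contra hn0
    have : (0:ℝ) < (n : ℝ) := by exact_mod_cast lt_of_le_of_ne hn (Ne.symm hn0)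
    nlinarith
  exact hne ⟨hk0, hm0, hn0⟩

lemma sign_cases (a b c : ℝ) (ha : 0 < a) (hb : 0 < b) (hc : 0 < c)
    (k m n : ℤ) (hne : ¬(k = 0 ∧ m = 0 ∧ n = 0))
    (hsum : (k : ℝ) * a + (m : ℝ) * b + (n : ℝ) * c = 0) :
    (∃ p q r : ℕ, 0 < p ∧ 0 < q + r ∧ (p : ℝ) * a = q * b + r * c)
    ∨ (∃ p q r : ℕ, 0 < p ∧ 0 < q + r ∧ (p : ℝ) * b = q * a + r * c)
    ∨ (∃ p q r : ℕ, 0 < p ∧ 0 < q + r ∧ (p : ℝ) * c = q * a + r * b) := by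
  rcases lt_trichotomy k 0 with hk | hk | hk <;>
    rcases lt_trichotomy m 0 with hm | hm | hm <;>
      rcases lt_trichotomy n 0 with hn | hn | hn <;>
  first
    | (subst hk; subst hm; subst hn; exact absurd ⟨rfl, rfl, rfl⟩ hne)
    | (exfalso; refine impossible a b c ha hb hc k m n ?_ ?_ ?_ ?_ hsum <;> first
        | omega
        | (rintro ⟨h1, h2, h3⟩; omega)
        | (push_cast; linarith))
    | (exfalso; refine impossible a b c ha hb hc (-k) (-m) (-n) ?_ ?_ ?_ ?_ ?_ <;> first
        | omega
        | (rintro ⟨h1, h2, h3⟩; omega)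
        | (push_cast; linarith))
    | (refine Or.inl (helperA a b c ha hb hc k m n ?_ ?_ ?_ ?_) <;> first
        | omega
        | (rintro ⟨h1, h2, h3⟩; omega)
        | (push_cast; linarith))
    | (refine Or.inl (helperA a b c ha hb hc (-k) (-m) (-n) ?_ ?_ ?_ ?_) <;> first
        | omega
        | (rintro ⟨h1, h2, h3⟩; omega)
        | (push_cast; linarith))
    | (refine Or.inr (Or.inl (helperA b a c hb ha hc m k n ?_ ?_ ?_ ?_)) <;> first
        | omega
        | (rintro ⟨h1, h2, h3⟩; omega)
        | (push_cast; linarith))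
    | (refine Or.inr (Or.inl (helperA b a c hb ha hc (-m) (-k) (-n) ?_ ?_ ?_ ?_)) <;> first
        | omega
        | (rintro ⟨h1, h2, h3⟩; omega)
        | (push_cast; linarith))
    | (refine Or.inr (Or.inr (helperA c a b hc ha hb n k m ?_ ?_ ?_ ?_)) <;> first
        | omega
        | (rintro ⟨h1, h2, h3⟩; omega)
        | (push_cast; linarith))
    | (refine Or.inr (Or.inr (helperA c a b hc ha hb (-n) (-k) (-m) ?_ ?_ ?_ ?_)) <;> first
        | omega
        | (rintro ⟨h1, h2, h3⟩; omega)
        | (push_cast; linarith))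

lemma grid_dissection (B : Box 3) (ks : Fin 3 → ℕ) (cs : Fin 3 → ℕ → ℝ)
    (hpos : ∀ i, 0 < ks i)
    (hstep : ∀ i, ∀ j < ks i, cs i j < cs i (j + 1))
    (hlo : ∀ i, cs i 0 = B.lower i)
    (hhi : ∀ i, cs i (ks i) = B.upper i)
    (hbar : ∀ idx : (∀ i, Fin (ks i)),
      (Finset.univ.image (fun i => cs i ((idx i : ℕ) + 1) - cs i (idx i))).card ≤ 2) :
    ∃ (m : ℕ) (t : Fin m → Box 3), IsDissection B t ∧
      ∀ i, (Finset.univ.image (t i).side).card ≤ 2 := by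
  set ι := (∀ i, Fin (ks i)) with hι
  set t : ι → Box 3 := fun idx =>
    ⟨fun i => cs i (idx i), fun i => cs i ((idx i : ℕ) + 1),
      fun i => hstep i _ (idx i).isLt⟩ with ht
  have hmono : ∀ i, ∀ j1 j2, j1 ≤ j2 → j2 ≤ ks i → cs i j1 ≤ cs i j2 :=
    fun i => cs_mono (cs i) (ks i) (hstep i)
  -- disjointness for ordered indices
  have key : ∀ (u v : ι) (i₀ : Fin 3), (u i₀ : ℕ) < (v i₀ : ℕ) →
      Disjoint (t u).interiorSet (t v).interiorSet := by
    intro u v i₀ hlt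
    rw [Set.disjoint_left]
    intro x hxu hxv
    have h1 := hxu i₀ (Set.mem_univ i₀)
    have h2 := hxv i₀ (Set.mem_univ i₀)
    simp only [ht] at h1 h2
    have hle : cs i₀ ((u i₀ : ℕ) + 1) ≤ cs i₀ (v i₀ : ℕ) :=
      hmono i₀ _ _ (by omega) (le_of_lt (v i₀).isLt)
    have := h1.2
    have := h2.1
    linarith
  have hdisj : ∀ u v : ι, u ≠ v →
      Disjoint (t u).interiorSet (t v).interiorSet := by
    intro u v huv
    have : ∃ i₀, u i₀ ≠ v i₀ := by
      by_contra hcon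
      push_neg at hcon
      exact huv (funext hcon)
    obtain ⟨i₀, hi₀⟩ := this
    have : (u i₀ : ℕ) ≠ (v i₀ : ℕ) := fun hh => hi₀ (Fin.ext hh)
    rcases lt_or_gt_of_ne this with hh | hh
    · exact key u v i₀ hh
    · exact (key v u i₀ hh).symm
  have hU : (⋃ idx : ι, (t idx).toSet) = B.toSet := by
    ext x
    simp only [Set.mem_iUnion, Box.toSet, Set.mem_pi, Set.mem_univ, true_implies]
    constructor
    · rintro ⟨idx, hx⟩ i
      have hxi := hx i
      simp only [ht, Set.mem_Icc] at hxi ⊢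
      constructor
      · calc B.lower i = cs i 0 := (hlo i).symm
          _ ≤ cs i (idx i : ℕ) := hmono i _ _ (Nat.zero_le _) (le_of_lt (idx i).isLt)
          _ ≤ x i := hxi.1
      · calc x i ≤ cs i ((idx i : ℕ) + 1) := hxi.2
          _ ≤ cs i (ks i) := hmono i _ _ (by have := (idx i).isLt; omega) (le_refl _)
          _ = B.upper i := hhi i
    · intro hx
      have hex : ∀ i, ∃ j < ks i, cs i j ≤ x i ∧ x i ≤ cs i (j + 1) := by
        intro i
        refine exists_between (cs i) (ks i) (hpos i) (hstep i) (x i) ?_ ?_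
        · rw [hlo i]; exact (hx i).1
        · rw [hhi i]; exact (hx i).2
      choose j hj hj1 hj2 using hex
      refine ⟨fun i => ⟨j i, hj i⟩, fun i => ?_⟩
      simp only [ht, Set.mem_Icc]
      exact ⟨hj1 i, hj2 i⟩
  -- transfer to Fin m
  let e := (Fintype.equivFin ι).symm
  refine ⟨Fintype.card ι, fun i => t (e i), ⟨?_, ?_⟩, ?_⟩
  · intro i j hij
    exact hdisj (e i) (e j) (fun hh => hij (e.injective hh))
  · rw [Function.Surjective.iUnion_comp e.surjective (fun idx => (t idx).toSet)]
    exact hU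
  · intro i
    exact hbar (e i)

lemma buildA (B : Box 3) (a b c : ℝ) (hb : 0 < b) (hc : 0 < c)
    (h0 : B.upper 0 - B.lower 0 = a) (h1 : B.upper 1 - B.lower 1 = b)
    (h2 : B.upper 2 - B.lower 2 = c)
    (p q r : ℕ) (hp : 0 < p) (hqr : 0 < q + r) (heq : (p : ℝ) * a = q * b + r * c) :
    ∃ (m : ℕ) (t : Fin m → Box 3), IsDissection B t ∧
      ∀ i, (Finset.univ.image (t i).side).card ≤ 2 := by
  have hp' : (0 : ℝ) < p := by exact_mod_cast hp
  have hβ : (0 : ℝ) < b / p := div_pos hb hp'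
  have hγ : (0 : ℝ) < c / p := div_pos hc hp'
  apply grid_dissection B ![q + r, p, p]
    ![mcut (B.lower 0) (b / p) (c / p) q,
      mcut (B.lower 1) (b / p) (b / p) 0,
      mcut (B.lower 2) (c / p) (c / p) 0]
  · intro i; fin_cases i <;> simp <;> omega
  · intro i; fin_cases i <;> intro j hj <;> simp only [Fin.zero_eta, Fin.mk_one, Fin.reduceFinMk, Matrix.cons_val_zero,
      Matrix.cons_val_one, Matrix.head_cons, Matrix.cons_val_two, Matrix.tail_cons] at hj ⊢
    · by_cases hjq : j < q
      · rw [mcut_succ_lt _ _ _ hjq]; linarith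
      · rw [mcut_succ_ge _ _ _ (not_lt.mp hjq)]; linarith
    · rw [mcut_succ_ge _ _ _ (Nat.zero_le j)]; linarith
    · rw [mcut_succ_ge _ _ _ (Nat.zero_le j)]; linarith
  · intro i; fin_cases i <;> simp [mcut_zero]
  · intro i; fin_cases i <;> simp only [Fin.zero_eta, Fin.mk_one, Fin.reduceFinMk, Matrix.cons_val_zero, Matrix.cons_val_one,
      Matrix.head_cons, Matrix.cons_val_two, Matrix.tail_cons]
    · rw [mcut_end]
      have : (q : ℝ) * (b / p) + r * (c / p) = a := by field_simp; linarith
      linarith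
    · rw [mcut_uniform]
      have : (p : ℝ) * (b / p) = b := by field_simp
      linarith
    · rw [mcut_uniform]
      have : (p : ℝ) * (c / p) = c := by field_simp
      linarith
  · intro idx
    apply card_image_le_two
    simp only [Fin.zero_eta, Fin.mk_one, Fin.reduceFinMk, Matrix.cons_val_zero, Matrix.cons_val_one, Matrix.head_cons,
      Matrix.cons_val_two, Matrix.tail_cons]
    by_cases hq : ((idx 0 : ℕ)) < q
    · left
      rw [mcut_succ_lt _ _ _ hq, mcut_uniform, mcut_uniform]
      push_cast; ring
    · right; left
      rw [mcut_succ_ge _ _ _ (not_lt.mp hq), mcut_uniform, mcut_uniform]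
      push_cast; ring

lemma buildB (B : Box 3) (a b c : ℝ) (ha : 0 < a) (hc : 0 < c)
    (h0 : B.upper 0 - B.lower 0 = a) (h1 : B.upper 1 - B.lower 1 = b)
    (h2 : B.upper 2 - B.lower 2 = c)
    (p q r : ℕ) (hp : 0 < p) (hqr : 0 < q + r) (heq : (p : ℝ) * b = q * a + r * c) :
    ∃ (m : ℕ) (t : Fin m → Box 3), IsDissection B t ∧
      ∀ i, (Finset.univ.image (t i).side).card ≤ 2 := by
  have hp' : (0 : ℝ) < p := by exact_mod_cast hp
  have hα : (0 : ℝ) < a / p := div_pos ha hp'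
  have hγ : (0 : ℝ) < c / p := div_pos hc hp'
  apply grid_dissection B ![p, q + r, p]
    ![mcut (B.lower 0) (a / p) (a / p) 0,
      mcut (B.lower 1) (a / p) (c / p) q,
      mcut (B.lower 2) (c / p) (c / p) 0]
  · intro i; fin_cases i <;> simp <;> omega
  · intro i; fin_cases i <;> intro j hj <;> simp only [Fin.zero_eta, Fin.mk_one, Fin.reduceFinMk, Matrix.cons_val_zero, Matrix.cons_val_one,
      Matrix.head_cons, Matrix.cons_val_two, Matrix.tail_cons] at hj ⊢
    · rw [mcut_succ_ge _ _ _ (Nat.zero_le j)]; linarith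
    · by_cases hjq : j < q
      · rw [mcut_succ_lt _ _ _ hjq]; linarith
      · rw [mcut_succ_ge _ _ _ (not_lt.mp hjq)]; linarith
    · rw [mcut_succ_ge _ _ _ (Nat.zero_le j)]; linarith
  · intro i; fin_cases i <;> simp [mcut_zero]
  · intro i; fin_cases i <;> simp only [Fin.zero_eta, Fin.mk_one, Fin.reduceFinMk, Matrix.cons_val_zero, Matrix.cons_val_one,
      Matrix.head_cons, Matrix.cons_val_two, Matrix.tail_cons]
    · rw [mcut_uniform]
      have : (p : ℝ) * (a / p) = a := by field_simp
      linarith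
    · rw [mcut_end]
      have : (q : ℝ) * (a / p) + r * (c / p) = b := by field_simp; linarith
      linarith
    · rw [mcut_uniform]
      have : (p : ℝ) * (c / p) = c := by field_simp
      linarith
  · intro idx
    apply card_image_le_two
    simp only [Fin.zero_eta, Fin.mk_one, Fin.reduceFinMk, Matrix.cons_val_zero, Matrix.cons_val_one,
      Matrix.head_cons, Matrix.cons_val_two, Matrix.tail_cons]
    by_cases hq : ((idx 1 : ℕ)) < q
    · left
      rw [mcut_uniform, mcut_uniform, mcut_succ_lt _ _ _ hq]
      push_cast; ring
    · right; right
      rw [mcut_succ_ge _ _ _ (not_lt.mp hq), mcut_uniform, mcut_uniform]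
      push_cast; ring

lemma buildC (B : Box 3) (a b c : ℝ) (ha : 0 < a) (hb : 0 < b)
    (h0 : B.upper 0 - B.lower 0 = a) (h1 : B.upper 1 - B.lower 1 = b)
    (h2 : B.upper 2 - B.lower 2 = c)
    (p q r : ℕ) (hp : 0 < p) (hqr : 0 < q + r) (heq : (p : ℝ) * c = q * a + r * b) :
    ∃ (m : ℕ) (t : Fin m → Box 3), IsDissection B t ∧
      ∀ i, (Finset.univ.image (t i).side).card ≤ 2 := by
  have hp' : (0 : ℝ) < p := by exact_mod_cast hp
  have hα : (0 : ℝ) < a / p := div_pos ha hp'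
  have hβ : (0 : ℝ) < b / p := div_pos hb hp'
  apply grid_dissection B ![p, p, q + r]
    ![mcut (B.lower 0) (a / p) (a / p) 0,
      mcut (B.lower 1) (b / p) (b / p) 0,
      mcut (B.lower 2) (a / p) (b / p) q]
  · intro i; fin_cases i <;> simp <;> omega
  · intro i; fin_cases i <;> intro j hj <;> simp only [Fin.zero_eta, Fin.mk_one, Fin.reduceFinMk, Matrix.cons_val_zero, Matrix.cons_val_one,
      Matrix.head_cons, Matrix.cons_val_two, Matrix.tail_cons] at hj ⊢
    · rw [mcut_succ_ge _ _ _ (Nat.zero_le j)]; linarith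
    · rw [mcut_succ_ge _ _ _ (Nat.zero_le j)]; linarith
    · by_cases hjq : j < q
      · rw [mcut_succ_lt _ _ _ hjq]; linarith
      · rw [mcut_succ_ge _ _ _ (not_lt.mp hjq)]; linarith
  · intro i; fin_cases i <;> simp [mcut_zero]
  · intro i; fin_cases i <;> simp only [Fin.zero_eta, Fin.mk_one, Fin.reduceFinMk, Matrix.cons_val_zero, Matrix.cons_val_one,
      Matrix.head_cons, Matrix.cons_val_two, Matrix.tail_cons]
    · rw [mcut_uniform]
      have : (p : ℝ) * (a / p) = a := by field_simp
      linarith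
    · rw [mcut_uniform]
      have : (p : ℝ) * (b / p) = b := by field_simp
      linarith
    · rw [mcut_end]
      have : (q : ℝ) * (a / p) + r * (b / p) = c := by field_simp; linarith
      linarith
  · intro idx
    apply card_image_le_two
    simp only [Fin.zero_eta, Fin.mk_one, Fin.reduceFinMk, Matrix.cons_val_zero, Matrix.cons_val_one,
      Matrix.head_cons, Matrix.cons_val_two, Matrix.tail_cons]
    by_cases hq : ((idx 2 : ℕ)) < q
    · right; left
      rw [mcut_uniform, mcut_uniform, mcut_succ_lt _ _ _ hq]
      push_cast; ring
    · right; right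
      rw [mcut_uniform, mcut_uniform, mcut_succ_ge _ _ _ (not_lt.mp hq)]
      push_cast; ring

end BarDissect

/-- If `k·a + m·b + n·c = 0` nontrivially with integers, then the box `a × b × c`
can be dissected into bars. -/
theorem bar_dissection_of_integer_relation (a b c : ℝ)
    (ha : 0 < a) (hb : 0 < b) (hc : 0 < c)
    (hrel : ∃ k m n : ℤ, (k, m, n) ≠ (0, 0, 0) ∧
      (k : ℝ) * a + (m : ℝ) * b + (n : ℝ) * c = 0) :
    ∀ B : Box 3, B.side = ![a, b, c] →
      ∃ (m : ℕ) (t : Fin m → Box 3), IsDissection B t ∧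
        ∀ i, (Finset.univ.image (t i).side).card ≤ 2 := by
  intro B hside
  have h0 : B.upper 0 - B.lower 0 = a := by
    have := congrFun hside 0; simpa [Box.side] using this
  have h1 : B.upper 1 - B.lower 1 = b := by
    have := congrFun hside 1; simpa [Box.side] using this
  have h2 : B.upper 2 - B.lower 2 = c := by
    have := congrFun hside 2; simpa [Box.side] using this
  obtain ⟨k, m, n, hne, hsum⟩ := hrel
  have hne' : ¬(k = 0 ∧ m = 0 ∧ n = 0) := by simpa [Prod.ext_iff] using hne
  rcases BarDissect.sign_cases a b c ha hb hc k m n hne' hsum with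
    ⟨p, q, r, hp, hqr, heq⟩ | ⟨p, q, r, hp, hqr, heq⟩ | ⟨p, q, r, hp, hqr, heq⟩
  · exact BarDissect.buildA B a b c hb hc h0 h1 h2 p q r hp hqr heq
  · exact BarDissect.buildB B a b c ha hc h0 h1 h2 p q r hp hqr heq
  · exact BarDissect.buildC B a b c ha hb h0 h1 h2 p q r hp hqr heq
end

section
/- Let a, b be positive reals with a/b irrational. Then in ℝ⁴, the box a×a×a×b cannot be partitioned into finitely many boxes of type x×x×y×y (two pairs of equal side lengths, up to permutation of coordinates). -/
/-!
Since `a / b` is irrational, `a` and `b` are linearly independent over `ℚ`, so some `ℚ`-linear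
`f : ℝ → ℚ` has `f a = 1` and `f b = -1`. Because `f` is additive, `K ↦ ∏ₖ f (side k of K)` is
additive under dissections, exactly like volume. It takes the value `(f x * f y) ^ 2 ≥ 0` on every
box `x × x × y × y` but `f a ^ 3 * f b = -1` on `a × a × a × b`.
-/

section ProdMapSide

open BoxIntegral Function

variable {ι R : Type*} [Fintype ι] [CommSemiring R]

theorem prod_map_update_sub_add_prod_map_sub_update [DecidableEq ι] (f : ℝ →+ R) (l u : ι → ℝ)
    (i : ι) (x : ℝ) :
    ∏ k, f (update u i x k - l k) + ∏ k, f (u k - update l i x k) = ∏ k, f (u k - l k) := by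
  have hsplit (v : ι → ℝ) (hv : ∀ k ≠ i, v k = u k - l k) :
      ∏ k, f (v k) = f (v i) * ∏ k ∈ Finset.univ.erase i, f (u k - l k) := by
    rw [← Finset.mul_prod_erase _ _ (Finset.mem_univ i)]
    congr 1
    exact Finset.prod_congr rfl fun k hk => by rw [hv k (Finset.ne_of_mem_erase hk)]
  rw [hsplit (fun k => update u i x k - l k) fun k hk => by simp [update_of_ne hk],
    hsplit (fun k => u k - update l i x k) fun k hk => by simp [update_of_ne hk],
    hsplit _ fun _ _ => rfl, ← add_mul, ← map_add]
  simp

def BoxIntegral.BoxAdditiveMap.prodMapSide (f : ℝ →+ R) : ι →ᵇᵃ R :=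
  BoxAdditiveMap.ofMapSplitAdd (fun I => ∏ k, f (I.upper k - I.lower k)) ⊤ fun I _ i x hx => by
    classical
    rw [Box.splitLower_def hx, Box.splitUpper_def hx]
    exact prod_map_update_sub_add_prod_map_sub_update f I.lower I.upper i x

end ProdMapSide

namespace Box

variable {n : ℕ}

/-- `BoxIntegral` boxes are half-open, `∏ₖ (lower k, upper k]`, so that its partitions are genuine
set partitions. -/
def toBoxIntegral (B : Box n) : BoxIntegral.Box (Fin n) :=
  ⟨B.lower, B.upper, B.lower_lt_upper⟩

theorem mem_toBoxIntegral {B : Box n} {x : Fin n → ℝ} :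
    x ∈ B.toBoxIntegral ↔ ∀ k, x k ∈ Set.Ioc (B.lower k) (B.upper k) :=
  Iff.rfl

theorem Icc_toBoxIntegral (B : Box n) : BoxIntegral.Box.Icc B.toBoxIntegral = B.toSet :=
  BoxIntegral.Box.Icc_eq_pi

theorem disjoint_coe_toBoxIntegral_iff {B C : Box n} :
    Disjoint (B.toBoxIntegral : Set (Fin n → ℝ)) C.toBoxIntegral ↔
      Disjoint B.interiorSet C.interiorSet := by
  simp only [Set.disjoint_iff_inter_eq_empty, BoxIntegral.Box.coe_eq_pi, interiorSet,
    ← Set.pi_inter_distrib, Set.Ioc_inter_Ioc, Set.Ioo_inter_Ioo, Set.univ_pi_eq_empty_iff,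
    Set.Ioc_eq_empty_iff, Set.Ioo_eq_empty_iff]
  rfl

theorem isClosed_toSet (B : Box n) : IsClosed B.toSet :=
  isClosed_set_pi fun _ _ => isClosed_Icc

end Box

namespace IsDissection

open Filter Topology

variable {n m : ℕ} {B : Box n} {t : Fin m → Box n}

theorem toBoxIntegral_le (h : IsDissection B t) (i : Fin m) :
    (t i).toBoxIntegral ≤ B.toBoxIntegral := by
  rw [BoxIntegral.Box.le_iff_Icc, Box.Icc_toBoxIntegral, Box.Icc_toBoxIntegral, ← h.2]
  exact Set.subset_iUnion (fun i => (t i).toSet) i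

theorem disjoint_toBoxIntegral (h : IsDissection B t) {i j : Fin m} (hij : i ≠ j) :
    Disjoint ((t i).toBoxIntegral : Set (Fin n → ℝ)) (t j).toBoxIntegral :=
  Box.disjoint_coe_toBoxIntegral_iff.2 (h.1 i j hij)

theorem injective_toBoxIntegral (h : IsDissection B t) :
    Function.Injective fun i => (t i).toBoxIntegral := by
  intro i j hij
  by_contra hne
  exact BoxIntegral.Box.ne_of_disjoint_coe (h.disjoint_toBoxIntegral hne) hij

/-- A point `x` of the half-open box is the limit of the points `x - ε` of `B` as `ε → 0⁺`; some
closed piece contains such points for arbitrarily small `ε`, hence contains `x`, with strict lower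
bounds. -/
theorem exists_mem_toBoxIntegral (h : IsDissection B t) {x : Fin n → ℝ}
    (hx : x ∈ B.toBoxIntegral) : ∃ i, x ∈ (t i).toBoxIntegral := by
  simp only [Box.mem_toBoxIntegral] at hx ⊢
  have hlower : ∀ᶠ ε in 𝓝[>] (0 : ℝ), ∀ k, B.lower k < x k - ε :=
    eventually_all.2 fun k => nhdsWithin_le_nhds <|
      eventually_lt_nhds (sub_pos.2 (hx k).1) |>.mono fun ε hε => by linarith
  have hcover : ∀ᶠ ε in 𝓝[>] (0 : ℝ), ∃ i, (fun k => x k - ε) ∈ (t i).toSet := by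
    filter_upwards [hlower, self_mem_nhdsWithin] with ε hε hε0
    rw [← Set.mem_iUnion, h.2]
    exact fun k _ =>
      ⟨(hε k).le, show x k - ε ≤ B.upper k by linarith [(hx k).2, Set.mem_Ioi.1 hε0]⟩
  obtain ⟨i, hi⟩ := frequently_exists.1 hcover.frequently
  have hlim : Tendsto (fun ε : ℝ => fun k => x k - ε) (𝓝[>] 0) (𝓝 x) :=
    ((continuous_pi fun k => continuous_const.sub continuous_id).tendsto' 0 x
      (by simp)).mono_left nhdsWithin_le_nhds
  have hxi := (t i).isClosed_toSet.mem_of_frequently_of_tendsto hi hlim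
  obtain ⟨ε, hε, hε0⟩ := (hi.and_eventually self_mem_nhdsWithin).exists
  exact ⟨i, fun k => ⟨(hε k trivial).1.trans_lt (sub_lt_self _ hε0), (hxi k trivial).2⟩⟩

def prepartition (h : IsDissection B t) : BoxIntegral.Prepartition B.toBoxIntegral where
  boxes := Finset.univ.map ⟨_, h.injective_toBoxIntegral⟩
  le_of_mem' := by
    simp only [Finset.mem_map, Finset.mem_univ, true_and, Function.Embedding.coeFn_mk,
      forall_exists_index, forall_apply_eq_imp_iff]
    exact h.toBoxIntegral_le
  pairwiseDisjoint := by
    simp only [Finset.coe_map, Finset.coe_univ, Set.image_univ, Function.Embedding.coeFn_mk]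
    rintro _ ⟨i, rfl⟩ _ ⟨j, rfl⟩ hne
    exact h.disjoint_toBoxIntegral fun hij => hne (by rw [hij])

theorem isPartition_prepartition (h : IsDissection B t) : h.prepartition.IsPartition := by
  intro x hx
  obtain ⟨i, hi⟩ := h.exists_mem_toBoxIntegral hx
  exact ⟨_, Finset.mem_map_of_mem _ (Finset.mem_univ i), hi⟩

theorem sum_prod_map_side {R : Type*} [CommSemiring R] (h : IsDissection B t) (f : ℝ →+ R) :
    ∑ i, ∏ k, f ((t i).side k) = ∏ k, f (B.side k) := by
  have := (BoxIntegral.BoxAdditiveMap.prodMapSide f).sum_partition_boxes le_top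
    h.isPartition_prepartition
  rwa [prepartition, Finset.sum_map] at this

end IsDissection

theorem linearIndependent_rat_pair_of_irrational_div {a b : ℝ} (h : Irrational (a / b)) :
    LinearIndependent ℚ ![a, b] := by
  have hb : b ≠ 0 := fun hb => h.ne_zero (by simp [hb])
  refine LinearIndependent.pair_iff.2 fun s r hsr => ?_
  rw [Rat.smul_def, Rat.smul_def] at hsr
  by_cases hs : s = 0
  · subst hs
    simp only [Rat.cast_zero, zero_mul, zero_add, mul_eq_zero, Rat.cast_eq_zero] at hsr
    exact ⟨rfl, hsr.resolve_right hb⟩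
  · refine absurd ?_ (h.ne_rat (-r / s))
    have : (s : ℝ) ≠ 0 := Rat.cast_ne_zero.2 hs
    push_cast
    field_simp
    linarith

theorem exists_dual_eq_one_eq_neg_one_of_irrational_div {a b : ℝ} (h : Irrational (a / b)) :
    ∃ f : Module.Dual ℚ ℝ, f a = 1 ∧ f b = -1 := by
  have hli := linearIndependent_rat_pair_of_irrational_div (b := -b) (by rw [div_neg]; exact h.neg)
  obtain ⟨f, hf⟩ := Module.exists_dual_forall_apply_eq_one hli.linearIndepOn_univ
  exact ⟨f, hf 0 trivial, neg_eq_iff_eq_neg.1 (by simpa using hf 1 trivial)⟩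

theorem prod_comp_perm_xxyy_nonneg {α R : Type*} [CommRing R] [LinearOrder R]
    [IsStrictOrderedRing R] (g : α → R) (σ : Equiv.Perm (Fin 4)) (x y : α) :
    0 ≤ ∏ k, g ((![x, x, y, y] ∘ σ) k) := by
  rw [Function.comp_def, Equiv.prod_comp σ (fun k => g (![x, x, y, y] k)), Fin.prod_univ_four]
  simp only [Matrix.cons_val]
  rw [show g x * g x * g y * g y = (g x * g y) ^ 2 by ring]
  exact sq_nonneg _

theorem aaab_not_into_xxyy_general (a b : ℝ)
    (hirr : Irrational (a / b)) :
    ∀ B : Box 4, B.side = ![a, a, a, b] →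
      ¬ ∃ (m : ℕ) (t : Fin m → Box 4), IsDissection B t ∧
        ∀ i, ∃ (σ : Equiv.Perm (Fin 4)) (x y : ℝ),
          (t i).side = ![x, x, y, y] ∘ σ := by
  rintro B hB ⟨m, t, ht, hshape⟩
  obtain ⟨f, hfa, hfb⟩ := exists_dual_eq_one_eq_neg_one_of_irrational_div hirr
  have hsum := ht.sum_prod_map_side f.toAddMonoidHom
  have hpieces : ∀ i, 0 ≤ ∏ k, f ((t i).side k) := fun i => by
    obtain ⟨σ, x, y, hσ⟩ := hshape i
    rw [hσ]
    exact prod_comp_perm_xxyy_nonneg f σ x y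
  have hB : ∏ k, f (B.side k) = -1 := by
    simp [hB, Fin.prod_univ_four, hfa, hfb]
  have := Finset.sum_nonneg fun i (_ : i ∈ Finset.univ) => hpieces i
  simp only [LinearMap.toAddMonoidHom_coe] at hsum
  linarith

/-- If `a / b` is irrational, the 4-dimensional box `a × a × a × b` cannot be
partitioned into boxes of type `x × x × y × y` (up to permutation of coordinates). -/
theorem aaab_not_into_xxyy (a b : ℝ) (ha : 0 < a) (hb : 0 < b)
    (hirr : Irrational (a / b)) :
    ∀ B : Box 4, B.side = ![a, a, a, b] →
      ¬ ∃ (m : ℕ) (t : Fin m → Box 4), IsDissection B t ∧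
        ∀ i, ∃ (σ : Equiv.Perm (Fin 4)) (x y : ℝ),
          (t i).side = ![x, x, y, y] ∘ σ :=
  aaab_not_into_xxyy_general a b hirr
end

section
/- If positive reals a₁, …, aₙ span a ℚ-vector space of dimension at most k, then the n-dimensional box with sides a₁, …, aₙ can be dissected into finitely many boxes all of whose side lengths lie in a fixed set {e₁, …, e_k} of k positive reals. -/
/-!
Choose a `ℚ`-linearly independent subfamily `b` of the sides spanning the same space, so `b` has
at most `k` members and `a i = ∑ j, v i j * b j` with rational `v`. For a vector `γ` with
`∑ γ ≠ 1`, the reals `e j = b j - γ j * ∑ b` satisfy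
`a i = ∑ j, (v i j + ψ i / (1 - ∑ γ)) * e j` where `ψ i = ∑ j, v i j * γ j`. At `γ = r • b / ∑ b`
with `r < 1` close to `1`, every `e j` and every coefficient is positive; these are strict
inequalities, so they persist for a rational `γ` nearby, and then the coefficients are rational.
Scaling the `e j` down by a common denominator makes the coefficients natural numbers `N i j`, and
cutting the `i`-th side into `N i j` segments of length `e j` for each `j` gives a grid dissection.
-/

open Finset Filter Topology

theorem sum_mul_eq_sum_add_div_mul_sub {K κ : Type*} [Field K] [Fintype κ] (x b γ : κ → K)
    (hγ : ∑ j, γ j ≠ 1) :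
    ∑ j, x j * b j =
      ∑ l, (x l + (∑ j, x j * γ j) / (1 - ∑ j, γ j)) * (b l - γ l * ∑ j, b j) := by
  have hγ' : 1 - ∑ j, γ j ≠ 0 := sub_ne_zero.2 hγ.symm
  have hx : ∑ l, x l * (b l - γ l * ∑ j, b j) =
      ∑ l, x l * b l - (∑ l, x l * γ l) * ∑ j, b j := by
    simp only [mul_sub, sum_sub_distrib, ← mul_assoc, ← sum_mul]
  have hsum_shear : ∑ l, (b l - γ l * ∑ j, b j) = (1 - ∑ j, γ j) * ∑ j, b j := by
    rw [sum_sub_distrib, ← sum_mul]; ring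
  simp only [add_mul, sum_add_distrib, hx, ← mul_sum, hsum_shear]
  field_simp
  ring

theorem exists_pos_nonneg_rat_combination {ι κ : Type*} [Finite ι] [Fintype κ]
    (b : κ → ℝ) (hb : ∀ j, 0 < b j) (v : ι → κ → ℚ) (hv : ∀ i, 0 < ∑ j, (v i j : ℝ) * b j) :
    ∃ e : κ → ℝ, (∀ j, 0 < e j) ∧ ∀ i, ∃ q : κ → ℚ, (∀ j, 0 ≤ q j) ∧
      ∑ j, (v i j : ℝ) * b j = ∑ j, (q j : ℝ) * e j := by
  cases isEmpty_or_nonempty κ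
  · exact ⟨isEmptyElim, isEmptyElim, fun i => absurd (hv i) (by simp)⟩
  set β := ∑ j, b j
  have hβ : 0 < β := sum_pos (fun j _ => hb j) univ_nonempty
  obtain ⟨r, hr, hcoeff⟩ : ∃ r < 1, ∀ i l, 0 < v i l * (1 - r) + r * (∑ j, v i j * b j) / β := by
    have : ∀ᶠ r in 𝓝 (1 : ℝ), ∀ i l, 0 < v i l * (1 - r) + r * (∑ j, v i j * b j) / β :=
      eventually_all.2 fun i => eventually_all.2 fun l =>
        ((by fun_prop : Continuous fun r : ℝ => v i l * (1 - r) + r * (∑ j, v i j * b j) / β)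
          |>.tendsto' 1 _ (by simp)).eventually_const_lt (div_pos (hv i) hβ)
    exact ((this.filter_mono nhdsWithin_le_nhds).and
      (self_mem_nhdsWithin : Set.Iio (1 : ℝ) ∈ 𝓝[<] 1)).exists.imp fun r h => ⟨h.2, h.1⟩
  set U : Set (κ → ℝ) := {γ | ∑ j, γ j < 1} ∩ (⋂ j, {γ | γ j * β < b j}) ∩
    ⋂ i, ⋂ l, {γ | 0 < v i l * (1 - ∑ j, γ j) + ∑ j, v i j * γ j}
  have hUo : IsOpen U :=
    ((isOpen_lt (by fun_prop) continuous_const).inter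
      (isOpen_iInter_of_finite fun j => isOpen_lt (by fun_prop) continuous_const)).inter
      (isOpen_iInter_of_finite fun i => isOpen_iInter_of_finite fun l =>
        isOpen_lt continuous_const (by fun_prop))
  have hU : (fun j => r * b j / β) ∈ U := by
    have hsum : ∑ j, r * b j / β = r := by
      rw [← sum_div, ← mul_sum, mul_div_assoc, div_self hβ.ne', mul_one]
    simp only [U, Set.mem_inter_iff, Set.mem_iInter, Set.mem_ofPred_eq, hsum]
    refine ⟨⟨hr, fun j => ?_⟩, fun i l => ?_⟩
    · rw [div_mul_cancel₀ _ hβ.ne']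
      nlinarith [hb j]
    · convert hcoeff i l using 2
      rw [mul_sum, sum_div]
      exact sum_congr rfl fun j _ => by ring
  obtain ⟨g, hg⟩ :=
    (DenseRange.piMap fun _ => Rat.denseRange_cast).exists_mem_open hUo ⟨_, hU⟩
  simp only [U, Set.mem_inter_iff, Set.mem_iInter, Set.mem_ofPred_eq, Pi.map_apply] at hg
  obtain ⟨⟨hΓ, hgb⟩, hgv⟩ := hg
  have hΓ' : 0 < 1 - ∑ j, g j := sub_pos.2 (by exact_mod_cast hΓ)
  refine ⟨fun j => b j - g j * β, fun j => sub_pos.2 (hgb j), fun i =>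
    ⟨fun l => v i l + (∑ j, v i j * g j) / (1 - ∑ j, g j), fun l => ?_, ?_⟩⟩
  · have h := div_pos (show (0 : ℚ) < v i l * (1 - ∑ j, g j) + ∑ j, v i j * g j by
      exact_mod_cast hgv i l) hΓ'
    rw [add_div, mul_div_cancel_right₀ _ hΓ'.ne'] at h
    exact h.le
  · rw [sum_mul_eq_sum_add_div_mul_sub _ b (fun j => (g j : ℝ)) hΓ.ne]
    push_cast
    rfl

theorem exists_pos_nonneg_rat_combination_of_rank_le {ι : Type*} [Fintype ι] {k : ℕ}
    (a : ι → ℝ) (ha : ∀ i, 0 < a i)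
    (hrank : Module.rank ℚ (Submodule.span ℚ (Set.range a)) ≤ k) :
    ∃ e : Fin k → ℝ, (∀ j, 0 < e j) ∧
      ∀ i, ∃ q : Fin k → ℚ, (∀ j, 0 ≤ q j) ∧ a i = ∑ j, (q j : ℝ) * e j := by
  classical
  obtain ⟨κ, f, hf, hspan, hli⟩ := exists_linearIndependent' ℚ a
  have : Finite κ := Finite.of_injective f hf
  have : Fintype κ := Fintype.ofFinite κ
  obtain ⟨emb⟩ : Nonempty (κ ↪ Fin k) := by
    refine Function.Embedding.nonempty_of_card_le ?_
    rw [Fintype.card_fin, ← finrank_span_eq_card hli, hspan]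
    exact Module.finrank_le_of_rank_le hrank
  have hcoord : ∀ i, ∃ v : κ → ℚ, a i = ∑ j, (v j : ℝ) * a (f j) := fun i => by
    have hi : a i ∈ Submodule.span ℚ (Set.range (a ∘ f)) :=
      hspan ▸ Submodule.subset_span (Set.mem_range_self i)
    obtain ⟨v, hv⟩ := (Submodule.mem_span_range_iff_exists_fun ℚ).1 hi
    exact ⟨v, by simp [← hv, Rat.smul_def]⟩
  choose v hv using hcoord
  obtain ⟨e, he, hq⟩ := exists_pos_nonneg_rat_combination (fun j => a (f j)) (fun j => ha (f j)) v
    fun i => hv i ▸ ha i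
  refine ⟨Function.extend emb e 1, fun j => ?_, fun i => ?_⟩
  · rw [Function.extend_def]
    split
    exacts [he _, one_pos]
  obtain ⟨q, hq0, hqe⟩ := hq i
  refine ⟨Function.extend emb q 0, fun j => ?_, ?_⟩
  · rw [Function.extend_def]
    split
    exacts [hq0 _, le_rfl]
  rw [hv i, hqe]
  refine Fintype.sum_of_injective emb emb.injective _ _ (fun j hj => ?_) fun x => ?_
  · rw [Function.extend_apply' _ _ _ hj, Pi.zero_apply, Rat.cast_zero, zero_mul]
  · rw [emb.injective.extend_apply, emb.injective.extend_apply]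

theorem exists_pos_nat_mul_eq_natCast {ι : Type*} [Fintype ι] (q : ι → ℚ) (hq : ∀ i, 0 ≤ q i) :
    ∃ D : ℕ, 0 < D ∧ ∀ i, ∃ m : ℕ, (D : ℚ) * q i = m := by
  refine ⟨∏ i, (q i).den, prod_pos fun i _ => (q i).den_pos, fun i => ?_⟩
  obtain ⟨D', hD'⟩ := dvd_prod_of_mem (fun i => (q i).den) (mem_univ i)
  refine ⟨D' * (q i).num.toNat, ?_⟩
  have hnum : (((q i).num.toNat : ℤ) : ℚ) = (q i).num := by
    rw [Int.toNat_of_nonneg (Rat.num_nonneg.2 (hq i))]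
  rw [hD', Nat.cast_mul, Nat.cast_mul, mul_comm ((q i).den : ℚ), mul_assoc, Rat.den_mul_eq_num,
    ← hnum, Int.cast_natCast]

theorem exists_pos_nat_combination_of_rank_le {ι : Type*} [Fintype ι] {k : ℕ} (a : ι → ℝ)
    (ha : ∀ i, 0 < a i) (hrank : Module.rank ℚ (Submodule.span ℚ (Set.range a)) ≤ k) :
    ∃ e : Fin k → ℝ, (∀ j, 0 < e j) ∧ ∀ i, ∃ N : Fin k → ℕ, a i = ∑ j, N j • e j := by
  obtain ⟨e, he, hq⟩ := exists_pos_nonneg_rat_combination_of_rank_le a ha hrank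
  choose q hq0 hq using hq
  obtain ⟨D, hD, hm⟩ := exists_pos_nat_mul_eq_natCast (fun p : ι × Fin k => q p.1 p.2)
    fun p => hq0 _ _
  choose m hm using hm
  refine ⟨fun j => e j / D, fun j => div_pos (he j) (Nat.cast_pos.2 hD),
    fun i => ⟨fun j => m (i, j), ?_⟩⟩
  rw [hq i]
  refine sum_congr rfl fun j _ => ?_
  have hmj : (m (i, j) : ℝ) = D * q i j := by exact_mod_cast (hm (i, j)).symm
  rw [nsmul_eq_mul, hmj]
  field_simp

theorem exists_list_sum_eq_sum_nsmul {ι M : Type*} [Fintype ι] [AddCommMonoid M] (N : ι → ℕ)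
    (e : ι → M) : ∃ L : List M, L.sum = ∑ j, N j • e j ∧ ∀ x ∈ L, x ∈ Set.range e := by
  refine ⟨(∑ j, Multiset.replicate (N j) (e j)).toList, ?_, fun x hx => ?_⟩
  · simp [Multiset.sum_sum]
  · simp only [Multiset.mem_toList, Multiset.mem_sum, Multiset.mem_replicate] at hx
    obtain ⟨j, -, -, rfl⟩ := hx
    exact ⟨j, rfl⟩

theorem Monotone.exists_lt_mem_Icc_succ {β : Type*} [LinearOrder β] {c : ℕ → β}
    (hc : Monotone c) {M : ℕ} (hM : 0 < M) {z : β} (hz : z ∈ Set.Icc (c 0) (c M)) :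
    ∃ t < M, z ∈ Set.Icc (c t) (c (t + 1)) := by
  rcases hz.1.eq_or_lt with rfl | h0
  · exact ⟨0, hM, le_rfl, hc (Nat.zero_le 1)⟩
  have : z ∈ ⋃ t ∈ Set.Ico 0 M, Set.Ioc (c t) (c (Order.succ t)) := by
    rw [hc.biUnion_Ico_Ioc_map_succ]
    exact ⟨h0, hz.2⟩
  simp only [Set.mem_iUnion, exists_prop, Order.succ_eq_add_one] at this
  obtain ⟨t, ht, hzt⟩ := this
  exact ⟨t, ht.2, Set.Ioc_subset_Icc_self hzt⟩

theorem List.monotone_sum_take_of_nonneg {L : List ℝ} (hL : ∀ x ∈ L, 0 ≤ x) :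
    Monotone fun t => (L.take t).sum := by
  refine monotone_nat_of_le_succ fun t => ?_
  rcases lt_or_ge t L.length with h | h
  · rw [List.sum_take_succ _ _ h]
    exact le_add_of_nonneg_right (hL _ (L.getElem_mem h))
  · simp [List.take_of_length_le h, List.take_of_length_le (h.trans t.le_succ)]

namespace Box

variable {n : ℕ} {M : Fin n → ℕ}

def gridCell (c : Fin n → ℕ → ℝ) (hc : ∀ i, ∀ t < M i, c i t < c i (t + 1))
    (σ : ∀ i, Fin (M i)) : Box n where
  lower i := c i (σ i)
  upper i := c i (σ i + 1)
  lower_lt_upper i := hc i _ (σ i).isLt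

variable {c : Fin n → ℕ → ℝ} (hc : ∀ i, ∀ t < M i, c i t < c i (t + 1))

theorem pairwise_disjoint_interiorSet_gridCell (hmono : ∀ i, Monotone (c i)) :
    Pairwise fun σ τ => Disjoint (gridCell c hc σ).interiorSet (gridCell c hc τ).interiorSet := by
  intro σ τ hστ
  obtain ⟨i, hi⟩ := Function.ne_iff.1 hστ
  exact Set.disjoint_univ_pi.2
    ⟨i, (hmono i).pairwise_disjoint_on_Ioo_succ (Fin.val_injective.ne hi)⟩

theorem iUnion_toSet_gridCell (B : Box n) (hmono : ∀ i, Monotone (c i))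
    (hlower : ∀ i, c i 0 = B.lower i)
    (hupper : ∀ i, c i (M i) = B.upper i) :
    ⋃ σ, (gridCell c hc σ).toSet = B.toSet := by
  ext z
  simp only [Set.mem_iUnion, toSet, gridCell, Set.mem_univ_pi]
  constructor
  · rintro ⟨σ, hσ⟩ i
    exact ⟨hlower i ▸ (hmono i (Nat.zero_le _)).trans (hσ i).1,
      hupper i ▸ (hσ i).2.trans (hmono i (σ i).isLt)⟩
  · intro hz
    have hM : ∀ i, 0 < M i := fun i => Nat.pos_of_ne_zero fun h0 => by
      have := B.lower_lt_upper i
      rw [← hlower, ← hupper, h0] at this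
      exact this.false
    choose σ hσ hzσ using fun i =>
      (hmono i).exists_lt_mem_Icc_succ (hM i) (by rw [hlower, hupper]; exact hz i)
    exact ⟨fun i => ⟨σ i, hσ i⟩, hzσ⟩

theorem exists_isDissection_of_pairwise_disjoint {ι : Type*} [Fintype ι] (B : Box n)
    (t : ι → Box n) (hdisj : Pairwise fun x y => Disjoint (t x).interiorSet (t y).interiorSet)
    (hunion : ⋃ x, (t x).toSet = B.toSet) :
    ∃ (m : ℕ) (t' : Fin m → Box n), IsDissection B t' ∧ ∀ s, ∃ x, t' s = t x := by
  let e := Fintype.equivFin ι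
  refine ⟨_, t ∘ e.symm, ⟨fun i j hij => hdisj (e.symm.injective.ne hij), ?_⟩, fun s => ⟨_, rfl⟩⟩
  rw [← hunion]
  exact e.symm.surjective.iUnion_comp fun x => (t x).toSet

theorem exists_isDissection_of_sum_eq_side (B : Box n) (L : Fin n → List ℝ)
    (hpos : ∀ i, ∀ x ∈ L i, 0 < x) (hsum : ∀ i, (L i).sum = B.side i) :
    ∃ (m : ℕ) (t : Fin m → Box n), IsDissection B t ∧ ∀ s d, (t s).side d ∈ L d := by
  set c : Fin n → ℕ → ℝ := fun i t => B.lower i + ((L i).take t).sum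
  have hstep : ∀ i t (h : t < (L i).length), c i (t + 1) - c i t = (L i)[t] := fun i t h => by
    simp [c, List.sum_take_succ _ _ h]
  have hc : ∀ i, ∀ t < (L i).length, c i t < c i (t + 1) := fun i t h =>
    sub_pos.1 (hstep i t h ▸ hpos i _ (List.getElem_mem h))
  have hmono : ∀ i, Monotone (c i) := fun i =>
    monotone_const.add (List.monotone_sum_take_of_nonneg fun x hx => (hpos i x hx).le)
  obtain ⟨m, t, ht, hcell⟩ := exists_isDissection_of_pairwise_disjoint B (gridCell c hc)
    (pairwise_disjoint_interiorSet_gridCell hc hmono)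
    (iUnion_toSet_gridCell hc B hmono (fun i => by simp [c]) (fun i => by simp [c, hsum, side]))
  refine ⟨m, t, ht, fun s d => ?_⟩
  obtain ⟨σ, hσ⟩ := hcell s
  rw [hσ, side, gridCell]
  exact hstep d _ (σ d).isLt ▸ List.getElem_mem _

end Box

/-- If the sides span a `ℚ`-vector space of dimension at most `k`, the box can be
dissected into boxes all of whose side lengths lie in a fixed set `{e₁, …, e_k}`
of `k` positive reals. -/
theorem dissection_with_sides_from_positive_basis (n k : ℕ) (a : Fin n → ℝ)
    (ha : ∀ i, 0 < a i)
    (hrank : Module.rank ℚ (Submodule.span ℚ (Set.range a)) ≤ k) :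
    ∃ e : Fin k → ℝ, (∀ j, 0 < e j) ∧
      ∀ B : Box n, B.side = a →
        ∃ (m : ℕ) (t : Fin m → Box n), IsDissection B t ∧
          ∀ i, ∀ d : Fin n, ∃ j, (t i).side d = e j := by
  obtain ⟨e, he, hN⟩ := exists_pos_nat_combination_of_rank_le a ha hrank
  refine ⟨e, he, fun B hB => ?_⟩
  choose N hN using hN
  choose L hLsum hLmem using fun i => exists_list_sum_eq_sum_nsmul (N i) e
  obtain ⟨m, t, ht, hside⟩ := B.exists_isDissection_of_sum_eq_side L
    (fun i x hx => by obtain ⟨j, rfl⟩ := hLmem i x hx; exact he j)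
    (fun i => by rw [hLsum, hB, hN])
  exact ⟨m, t, ht, fun s d => (hLmem d _ (hside s d)).imp fun _ => Eq.symm⟩
end

section
/- If positive real numbers x₁, …, xₙ span a k-dimensional vector space over ℚ, then there exist positive reals e₁, …, e_k such that each xⱼ is a linear combination of e₁, …, e_k with nonnegative integer coefficients. -/
open Filter Topology Submodule

theorem exists_fin_range_subset_span_eq {K V : Type*} [DivisionRing K] [AddCommGroup V]
    [Module K V] {s : Set V} {k : ℕ} (h : Module.rank K (span K s) = k) :
    ∃ f : Fin k → V, Set.range f ⊆ s ∧ span K (Set.range f) = span K s := by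
  obtain ⟨b, hbs, hspan, hli⟩ := exists_linearIndependent K s
  have hcard : Cardinal.mk b = k := by rw [← rank_span_set hli, hspan, h]
  obtain ⟨eqv⟩ := Cardinal.mk_eq_nat_iff.mp hcard
  refine ⟨(↑) ∘ eqv.symm, ?_, ?_⟩ <;>
    rw [Set.range_comp, eqv.symm.range_eq_univ, Set.image_univ, Subtype.range_coe]
  exacts [hbs, hspan]

theorem sum_add_sum_mul_mul_sub_mul {R ι : Type*} [CommRing R] [Fintype ι] (a f u : ι → R) (τ : R)
    (hτ : τ * (1 + ∑ i, u i) = ∑ i, f i) :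
    ∑ i, (a i + ∑ t, a t * u t) * (f i - τ * u i) = ∑ i, a i * f i := by
  simp only [add_mul, mul_sub, Finset.sum_add_distrib, Finset.sum_sub_distrib, ← Finset.mul_sum,
    mul_left_comm _ τ]
  linear_combination -(∑ t, a t * u t) * hτ

theorem exists_rat_perturbation {ι κ : Type*} [Fintype ι] [Finite κ] (f : ι → ℝ) (hf : ∀ i, 0 < f i)
    (a : κ → ι → ℚ) (ha : ∀ j, 0 < ∑ i, (a j i : ℝ) * f i) :
    ∃ u : ι → ℚ, 0 < 1 + ∑ i, (u i : ℝ) ∧ (∀ i, u i * ∑ t, f t < f i * (1 + ∑ t, (u t : ℝ))) ∧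
      ∀ j i, 0 < a j i + ∑ t, (a j t : ℝ) * u t := by
  have hS : 0 ≤ ∑ t, f t := Finset.sum_nonneg fun t _ => (hf t).le
  obtain ⟨l, hl, hla⟩ : ∃ l : ℝ, 0 ≤ l ∧ ∀ j i, 0 < a j i + l * ∑ t, (a j t : ℝ) * f t := by
    refine ((eventually_ge_atTop 0).and
      (eventually_all.2 fun j => eventually_all.2 fun i => ?_)).exists
    exact (tendsto_atTop_add_const_left _ _
      (tendsto_id.atTop_mul_const (ha j))).eventually_gt_atTop 0
  have hgood : ∀ᶠ u in 𝓝 (l • f), 0 < 1 + ∑ i, u i ∧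
      (∀ i, u i * ∑ t, f t < f i * (1 + ∑ t, u t)) ∧
      ∀ j i, 0 < a j i + ∑ t, (a j t : ℝ) * u t := by
    have lt_near {g h : (ι → ℝ) → ℝ} (hg : Continuous g) (hh : Continuous h)
        (hlt : g (l • f) < h (l • f)) : ∀ᶠ u in 𝓝 (l • f), g u < h u :=
      hg.continuousAt.eventually_lt hh.continuousAt hlt
    refine (lt_near (by fun_prop) (by fun_prop) ?_).and <|
      (eventually_all.2 fun i => lt_near (by fun_prop) (by fun_prop) ?_).and <|
      eventually_all.2 fun j => eventually_all.2 fun i => lt_near (by fun_prop) (by fun_prop) ?_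
    · simp only [Pi.smul_apply, smul_eq_mul, ← Finset.mul_sum]; positivity
    · simp only [Pi.smul_apply, smul_eq_mul, ← Finset.mul_sum]; nlinarith [hf i]
    · simpa [Finset.mul_sum, mul_left_comm] using hla j i
  exact (DenseRange.piMap fun _ => Rat.denseRange_cast).mem_nhds hgood

theorem exists_pos_rat_coeffs {ι κ : Type*} [Fintype ι] [Finite κ] (x : κ → ℝ) (hx : ∀ j, 0 < x j)
    (f : ι → ℝ) (hf : ∀ i, 0 < f i) (a : κ → ι → ℚ) (ha : ∀ j, x j = ∑ i, (a j i : ℝ) * f i) :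
    ∃ e : ι → ℝ, (∀ i, 0 < e i) ∧ ∃ c : κ → ι → ℚ, (∀ j i, 0 < c j i) ∧
      ∀ j, x j = ∑ i, (c j i : ℝ) * e i := by
  obtain ⟨u, hU, hue, huc⟩ := exists_rat_perturbation f hf a fun j => ha j ▸ hx j
  set τ := (∑ t, f t) / (1 + ∑ t, (u t : ℝ))
  have hτ : τ * (1 + ∑ t, (u t : ℝ)) = ∑ t, f t := div_mul_cancel₀ _ hU.ne'
  refine ⟨fun i => f i - τ * u i, fun i => ?_, fun j i => a j i + ∑ t, a j t * u t,
    fun j i => by exact_mod_cast huc j i, fun j => ?_⟩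
  · have : τ * u i < f i := by
      rw [div_mul_eq_mul_div, div_lt_iff₀ hU, mul_comm]
      exact hue i
    linarith
  · push_cast
    rw [sum_add_sum_mul_mul_sub_mul _ _ _ τ hτ, ha j]

theorem exists_nat_mul_eq_of_nonneg {ι : Type*} [Finite ι] (c : ι → ℚ) (hc : ∀ i, 0 ≤ c i) :
    ∃ N : ℕ, 0 < N ∧ ∀ i, ∃ m : ℕ, (N : ℚ) * c i = m := by
  have := Fintype.ofFinite ι
  refine ⟨∏ i, (c i).den, Finset.prod_pos fun i _ => (c i).pos, fun i => ?_⟩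
  obtain ⟨t, ht⟩ := Finset.dvd_prod_of_mem (fun i => (c i).den) (Finset.mem_univ i)
  refine ⟨t * (c i).num.toNat, ?_⟩
  have hnum : ((c i).num.toNat : ℤ) = (c i).num := Int.toNat_of_nonneg (Rat.num_nonneg.2 (hc i))
  rw [ht, Nat.cast_mul, mul_comm ((c i).den : ℚ), mul_assoc, Rat.den_mul_eq_num, Nat.cast_mul,
    ← Int.cast_natCast (c i).num.toNat, hnum]

theorem exists_nat_coeffs_of_rat_coeffs {ι κ : Type*} [Fintype ι] [Finite κ] (x : κ → ℝ)
    (e : ι → ℝ) (he : ∀ i, 0 < e i) (c : κ → ι → ℚ) (hc : ∀ j i, 0 ≤ c j i)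
    (hx : ∀ j, x j = ∑ i, (c j i : ℝ) * e i) :
    ∃ e' : ι → ℝ, (∀ i, 0 < e' i) ∧ ∀ j, ∃ m : ι → ℕ, x j = ∑ i, (m i : ℝ) * e' i := by
  obtain ⟨N, hN, hm⟩ := exists_nat_mul_eq_of_nonneg (fun p : κ × ι => c p.1 p.2) fun p => hc _ _
  choose m hm using hm
  refine ⟨fun i => e i / N, fun i => div_pos (he i) (by positivity),
    fun j => ⟨fun i => m (j, i), ?_⟩⟩
  rw [hx j]
  refine Finset.sum_congr rfl fun i _ => ?_
  have : (m (j, i) : ℝ) = N * c j i := by exact_mod_cast (hm (j, i)).symm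
  rw [this]
  field_simp

/-- If positive reals `x₁, …, xₙ` span a `k`-dimensional `ℚ`-vector space, there are
positive reals `e₁, …, e_k` expressing each `xⱼ` as a nonnegative integer combination. -/
theorem positive_basis_conclusion (n k : ℕ) (x : Fin n → ℝ) (hx : ∀ i, 0 < x i)
    (hrank : Module.rank ℚ (Submodule.span ℚ (Set.range x)) = k) :
    ∃ e : Fin k → ℝ, (∀ i, 0 < e i) ∧
      ∀ j, ∃ c : Fin k → ℕ, x j = ∑ i, (c i : ℝ) * e i := by
  obtain ⟨f, hfx, hspan⟩ := exists_fin_range_subset_span_eq hrank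
  have hf : ∀ i, 0 < f i := fun i => by
    obtain ⟨j, hj⟩ := hfx ⟨i, rfl⟩
    exact hj ▸ hx j
  have hxf : ∀ j, x j ∈ span ℚ (Set.range f) := fun j => hspan ▸ subset_span ⟨j, rfl⟩
  choose a ha using fun j => (mem_span_range_iff_exists_fun ℚ).1 (hxf j)
  obtain ⟨e, he, c, hc, hxc⟩ :=
    exists_pos_rat_coeffs x hx f hf a fun j => by simp only [← ha j, Rat.smul_def]
  exact exists_nat_coeffs_of_rat_coeffs x e he c (fun j i => (hc j i).le) hxc
end

section
/- It is impossible to fill a 6×6×6 box with 1×2×4 bricks (axis-parallel placements in arbitrary orientations). -/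
open MeasureTheory Complex

lemma integral_exp_mul_eq_zero_iff {c : ℂ} (hc : c ≠ 0) (a L : ℝ) :
    ∫ x in a..a + L, exp (c * x) = 0 ↔ exp (c * L) = 1 := by
  rw [integral_exp_mul_complex hc, div_eq_zero_iff, or_iff_left hc, ofReal_add, mul_add,
    Complex.exp_add, ← mul_sub_one, mul_eq_zero, or_iff_right (exp_ne_zero _), sub_eq_zero]

namespace Box

variable {n : ℕ} (B : Box n)

lemma lower_add_side (i : Fin n) : B.lower i + B.side i = B.upper i := by
  rw [side, add_sub_cancel]

lemma measurableSet_toSet : MeasurableSet B.toSet :=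
  .univ_pi fun _ => measurableSet_Icc

lemma isCompact_toSet : IsCompact B.toSet :=
  isCompact_univ_pi fun _ => isCompact_Icc

lemma interiorSet_ae_eq_toSet : B.interiorSet =ᵐ[volume] B.toSet :=
  Measure.pi_Ioo_ae_eq_pi_Icc

lemma setIntegral_prod {𝕜 : Type*} [RCLike 𝕜] (g : Fin n → ℝ → 𝕜) :
    ∫ x in B.toSet, ∏ i, g i (x i) = ∏ i, ∫ y in B.lower i..B.upper i, g i y := by
  rw [toSet, volume_pi, Measure.restrict_pi_pi, integral_fintype_prod_eq_prod]
  refine Finset.prod_congr rfl fun i _ => ?_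
  rw [intervalIntegral.integral_of_le (B.lower_lt_upper i).le, integral_Icc_eq_integral_Ioc]

lemma setIntegral_prod_exp_eq_zero_iff {c : ℂ} (hc : c ≠ 0) :
    ∫ x in B.toSet, ∏ i, exp (c * x i) = 0 ↔ ∃ i, exp (c * B.side i) = 1 := by
  simp only [B.setIntegral_prod fun _ y => exp (c * y), Finset.prod_eq_zero_iff,
    Finset.mem_univ, true_and, ← B.lower_add_side, integral_exp_mul_eq_zero_iff hc]

end Box

lemma IsDissection.setIntegral_eq_sum {E : Type*} [NormedAddCommGroup E] [NormedSpace ℝ E]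
    {n m : ℕ} {B : Box n} {t : Fin m → Box n} (h : IsDissection B t)
    {f : (Fin n → ℝ) → E} (hf : IntegrableOn f B.toSet) :
    ∫ x in B.toSet, f x = ∑ j, ∫ x in (t j).toSet, f x := by
  obtain ⟨hdisj, hcover⟩ := h
  have hae : Pairwise fun i j => AEDisjoint volume (t i).toSet (t j).toSet := fun i j hij =>
    (hdisj i j hij).aedisjoint.congr (t i).interiorSet_ae_eq_toSet.symm
      (t j).interiorSet_ae_eq_toSet.symm
  rw [← hcover, integral_iUnion_ae (fun j => (t j).measurableSet_toSet.nullMeasurableSet) hae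
    (hcover ▸ hf), tsum_fintype]

lemma exp_pi_div_two_mul_I_mul_four : exp (Real.pi / 2 * I * (4 : ℝ)) = 1 := by
  rw [show Real.pi / 2 * I * (4 : ℝ) = (2 : ℕ) * (Real.pi * I) by push_cast; ring, exp_nat_mul,
    exp_pi_mul_I]
  norm_num

lemma exp_pi_div_two_mul_I_mul_six : exp (Real.pi / 2 * I * (6 : ℝ)) = -1 := by
  rw [show Real.pi / 2 * I * (6 : ℝ) = (3 : ℕ) * (Real.pi * I) by push_cast; ring, exp_nat_mul,
    exp_pi_mul_I]
  norm_num

/-- A `6 × 6 × 6` box cannot be filled by (axis-parallel, arbitrarily oriented)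
`1 × 2 × 4` bricks. -/
theorem no_brick_filling_of_cube :
    ∀ B : Box 3, B.side = (fun _ => (6 : ℝ)) →
      ¬ ∃ (m : ℕ) (t : Fin m → Box 3), IsDissection B t ∧
        ∀ i, ∃ σ : Equiv.Perm (Fin 3), (t i).side = ![1, 2, 4] ∘ σ := by
  rintro B hB ⟨m, t, hdiss, hbricks⟩
  have hc : (Real.pi / 2 * I : ℂ) ≠ 0 := by simp [Real.pi_ne_zero, I_ne_zero]
  have hcube : ∫ x in B.toSet, ∏ i, exp (Real.pi / 2 * I * x i) ≠ 0 := by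
    rw [Ne, B.setIntegral_prod_exp_eq_zero_iff hc, hB]
    simp only [exp_pi_div_two_mul_I_mul_six, exists_const]
    norm_num
  have hbrick (j : Fin m) : ∫ x in (t j).toSet, ∏ i, exp (Real.pi / 2 * I * x i) = 0 := by
    obtain ⟨σ, hσ⟩ := hbricks j
    rw [(t j).setIntegral_prod_exp_eq_zero_iff hc, hσ]
    exact ⟨σ.symm 2, by simpa using exp_pi_div_two_mul_I_mul_four⟩
  have hf : IntegrableOn (fun x : Fin 3 → ℝ => ∏ i, exp (Real.pi / 2 * I * x i)) B.toSet :=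
    ContinuousOn.integrableOn_compact B.isCompact_toSet (by fun_prop)
  exact hcube (by rw [hdiss.setIntegral_eq_sum hf]; exact Finset.sum_eq_zero fun j _ => hbrick j)
end
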